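/- arXiv:2401.13274 — 7 statements merged into one kernel-verified Lean document; each statement's English description precedes it below -/
import Mathlib

section
/- Let X : ℝ → ℝ² be a smooth map with X'(ρ) ≠ 0 for all ρ. Define the arc-length derivative of a function f by ∂_s f := (1/‖X'‖) f', the unit tangent τ := ∂_s X, the outward unit normal n := −τ^⊥ where (u₁,u₂)^⊥ := (−u₂,u₁), and the curvature κ := −n · ∂_s(∂_s X). Then for all ρ, ∂_s( (∂_s κ) n − (1/2) κ² ∂_s X )(ρ) = ( ∂_s(∂_s κ)(ρ) + (1/2) κ(ρ)³ ) n(ρ). In particular, if V := ∂_s(∂_s κ) + (1/2)κ³ is the normal velocity of the Willmore flow, then V n = ∂_s( (∂_s κ) n − (1/2)κ² ∂_s X ). (Lemma 2.1) -/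
noncomputable section

/-- The plane `ℝ²` with the Euclidean norm. -/
abbrev E2 : Type := EuclideanSpace ℝ (Fin 2)

/-- Clockwise-rotation convention: `(u₁, u₂)^⊥ = (−u₂, u₁)`. -/
def perp (u : E2) : E2 := (WithLp.equiv 2 (Fin 2 → ℝ)).symm ![-(u 1), u 0]

/-- Arc-length derivative along the curve parameterized by `X`:
`∂ₛ f := (1/‖Xʹ‖) fʹ`. -/
def ds (X : ℝ → E2) {F : Type*} [NormedAddCommGroup F] [NormedSpace ℝ F]
    (f : ℝ → F) (ρ : ℝ) : F := ‖deriv X ρ‖⁻¹ • deriv f ρ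

/-- Unit tangent `τ := ∂ₛ X`. -/
def tau (X : ℝ → E2) (ρ : ℝ) : E2 := ds X X ρ

/-- Outward unit normal `n := −τ^⊥`. -/
def nor (X : ℝ → E2) (ρ : ℝ) : E2 := -perp (tau X ρ)

/-- Curvature `κ := −n · ∂ₛ(∂ₛ X)`. -/
def curv (X : ℝ → E2) (ρ : ℝ) : ℝ := -(inner ℝ (nor X ρ) (ds X (ds X X) ρ) : ℝ)

/-- Willmore normal velocity `V := ∂ₛ(∂ₛ κ) + (1/2) κ³`. -/
def willV (X : ℝ → E2) (ρ : ℝ) : ℝ := ds X (ds X (curv X)) ρ + (1/2) * curv X ρ ^ 3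

open scoped ContDiff

def perpL : E2 →L[ℝ] E2 :=
  LinearMap.toContinuousLinearMap
    { toFun := perp
      map_add' := by intro u v; ext i; fin_cases i <;> (simp [perp]; try ring)
      map_smul' := by intro c u; ext i; fin_cases i <;> (simp [perp]; try ring) }

section
variable (X : ℝ → E2)

lemma smooth_derivX (hX : ContDiff ℝ ∞ X) : ContDiff ℝ ∞ (deriv X) :=
  (contDiff_infty_iff_deriv.mp hX).2

lemma smooth_g (hX : ContDiff ℝ ∞ X) (hreg : ∀ ρ, deriv X ρ ≠ 0) :
    ContDiff ℝ ∞ (fun ρ => ‖deriv X ρ‖⁻¹) := by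
  rw [contDiff_iff_contDiffAt]
  intro ρ
  exact (((smooth_derivX X hX).contDiffAt).norm ℝ (hreg ρ)).inv
    (norm_ne_zero_iff.mpr (hreg ρ))

lemma smooth_ds (hX : ContDiff ℝ ∞ X) (hreg : ∀ ρ, deriv X ρ ≠ 0)
    {F : Type*} [NormedAddCommGroup F] [NormedSpace ℝ F]
    {f : ℝ → F} (hf : ContDiff ℝ ∞ f) : ContDiff ℝ ∞ (ds X f) :=
  (smooth_g X hX hreg).smul (contDiff_infty_iff_deriv.mp hf).2

lemma smooth_tau (hX : ContDiff ℝ ∞ X) (hreg : ∀ ρ, deriv X ρ ≠ 0) :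
    ContDiff ℝ ∞ (tau X) := smooth_ds X hX hreg hX

lemma smooth_nor (hX : ContDiff ℝ ∞ X) (hreg : ∀ ρ, deriv X ρ ≠ 0) :
    ContDiff ℝ ∞ (nor X) := by
  have : nor X = fun ρ => -(perpL (tau X ρ)) := rfl
  rw [this]
  exact (perpL.contDiff.comp (smooth_tau X hX hreg)).neg

lemma smooth_curv (hX : ContDiff ℝ ∞ X) (hreg : ∀ ρ, deriv X ρ ≠ 0) :
    ContDiff ℝ ∞ (curv X) := by
  have : curv X = fun ρ => -(inner ℝ (nor X ρ) (ds X (ds X X) ρ) : ℝ) := rfl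
  rw [this]
  exact ((smooth_nor X hX hreg).inner ℝ (smooth_ds X hX hreg (smooth_ds X hX hreg hX))).neg

end

section
variable (X : ℝ → E2)

lemma perp_apply0 (u : E2) : perp u 0 = -(u 1) := rfl
lemma perp_apply1 (u : E2) : perp u 1 = u 0 := rfl

lemma inner_eq (u v : E2) : (inner ℝ u v : ℝ) = u 0 * v 0 + u 1 * v 1 := by
  simp [PiLp.inner_apply, Fin.sum_univ_two, RCLike.inner_apply, mul_comm]

lemma perpL_apply (u : E2) : perpL u = perp u := rfl

lemma perp_perp (u : E2) : perp (perp u) = -u := by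
  ext i; fin_cases i <;> simp [perp_apply0, perp_apply1]

lemma perp_neg (u : E2) : perp (-u) = -perp u := by
  rw [← perpL_apply, ← perpL_apply, map_neg]

lemma perp_smul (c : ℝ) (u : E2) : perp (c • u) = c • perp u := by
  rw [← perpL_apply, ← perpL_apply, map_smul]

lemma decomp (u v : E2) (hu : ‖u‖ = 1) :
    v = (inner ℝ u v : ℝ) • u + (inner ℝ (perp u) v : ℝ) • perp u := by
  have h : u 0 * u 0 + u 1 * u 1 = 1 := by
    have := real_inner_self_eq_norm_sq u
    rw [hu] at this; rw [inner_eq] at this; linarith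
  ext i; fin_cases i
  · simp [inner_eq, perp_apply0, perp_apply1, PiLp.add_apply, PiLp.smul_apply, smul_eq_mul]
    linear_combination -v 0 * h
  · simp [inner_eq, perp_apply0, perp_apply1, PiLp.add_apply, PiLp.smul_apply, smul_eq_mul]
    linear_combination -v 1 * h

lemma norm_tau (hreg : ∀ ρ, deriv X ρ ≠ 0) (ρ : ℝ) : ‖tau X ρ‖ = 1 := by
  have h : ‖deriv X ρ‖ ≠ 0 := norm_ne_zero_iff.mpr (hreg ρ)
  simp [tau, ds, norm_smul, abs_of_nonneg (inv_nonneg.mpr (norm_nonneg _)),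
    inv_mul_cancel₀ h]

lemma hasDerivAt_of_smooth {F : Type*} [NormedAddCommGroup F] [NormedSpace ℝ F]
    {f : ℝ → F} (hf : ContDiff ℝ ∞ f) (ρ : ℝ) : HasDerivAt f (deriv f ρ) ρ :=
  ((hf.differentiable (by simp)) ρ).hasDerivAt

lemma inner_tau_deriv_tau (hX : ContDiff ℝ ∞ X) (hreg : ∀ ρ, deriv X ρ ≠ 0) (ρ : ℝ) :
    (inner ℝ (tau X ρ) (deriv (tau X) ρ) : ℝ) = 0 := by
  have hτ := hasDerivAt_of_smooth (smooth_tau X hX hreg)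
  have H : ∀ q, (inner ℝ (tau X q) (tau X q) : ℝ) = 1 := by
    intro q
    rw [real_inner_self_eq_norm_sq, norm_tau X hreg q]; norm_num
  have h1 : HasDerivAt (fun q => (inner ℝ (tau X q) (tau X q) : ℝ))
      ((inner ℝ (tau X ρ) (deriv (tau X) ρ) : ℝ) + (inner ℝ (deriv (tau X) ρ) (tau X ρ) : ℝ)) ρ :=
    HasDerivAt.inner ℝ (hτ ρ) (hτ ρ)
  have h2 : HasDerivAt (fun q => (inner ℝ (tau X q) (tau X q) : ℝ)) 0 ρ := by
    have : (fun q => (inner ℝ (tau X q) (tau X q) : ℝ)) = fun _ => (1:ℝ) := funext H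
    rw [this]; exact hasDerivAt_const ρ 1
  have := h1.unique h2
  rw [real_inner_comm (tau X ρ) (deriv (tau X) ρ)] at this
  linarith

lemma tau_eq : tau X = ds X X := rfl

lemma ds_tau_eq (hX : ContDiff ℝ ∞ X) (hreg : ∀ ρ, deriv X ρ ≠ 0) (ρ : ℝ) :
    ds X (tau X) ρ = -(curv X ρ) • nor X ρ := by
  have hd := decomp (tau X ρ) (ds X (tau X) ρ) (norm_tau X hreg ρ)
  have h1 : (inner ℝ (tau X ρ) (ds X (tau X) ρ) : ℝ) = 0 := by
    rw [ds, real_inner_smul_right, inner_tau_deriv_tau X hX hreg ρ, mul_zero]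
  have h2 : perp (tau X ρ) = -(nor X ρ) := by rw [nor, neg_neg]
  have h3 : (inner ℝ (perp (tau X ρ)) (ds X (tau X) ρ) : ℝ) = curv X ρ := by
    rw [h2, inner_neg_left, curv, tau_eq]
  rw [h1, h3, h2] at hd
  rw [hd]; module

lemma hasDerivAt_nor (hX : ContDiff ℝ ∞ X) (hreg : ∀ ρ, deriv X ρ ≠ 0) (ρ : ℝ) :
    HasDerivAt (nor X) (-(perp (deriv (tau X) ρ))) ρ := by
  have hτ := hasDerivAt_of_smooth (smooth_tau X hX hreg) ρ
  have := (perpL.hasFDerivAt.comp_hasDerivAt ρ hτ).neg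
  simp only [perpL_apply] at this
  exact this

lemma ds_nor_eq (hX : ContDiff ℝ ∞ X) (hreg : ∀ ρ, deriv X ρ ≠ 0) (ρ : ℝ) :
    ds X (nor X) ρ = curv X ρ • tau X ρ := by
  have h1 : deriv (nor X) ρ = -(perp (deriv (tau X) ρ)) :=
    (hasDerivAt_nor X hX hreg ρ).deriv
  have h2 : ds X (nor X) ρ = -(perp (ds X (tau X) ρ)) := by
    rw [ds, h1, ds, perp_smul, smul_neg]
  rw [h2, ds_tau_eq X hX hreg ρ, perp_smul, nor, perp_neg, perp_perp]
  module

end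

/-- Lemma 2.1: the geometric identity
`∂ₛ((∂ₛκ) n − (1/2) κ² ∂ₛX) = (∂ₛ(∂ₛκ) + (1/2)κ³) n`, and consequently
`V n = ∂ₛ((∂ₛκ) n − (1/2) κ² ∂ₛX)` for the Willmore normal velocity `V`. -/
theorem willmore_velocity_identity (X : ℝ → E2) (hX : ContDiff ℝ (⊤ : ℕ∞) X)
    (hreg : ∀ ρ, deriv X ρ ≠ 0) :
    (∀ ρ : ℝ,
      ds X (fun q => ds X (curv X) q • nor X q - ((1/2) * curv X q ^ 2) • ds X X q) ρ
        = (ds X (ds X (curv X)) ρ + (1/2) * curv X ρ ^ 3) • nor X ρ) ∧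
    (∀ ρ : ℝ,
      willV X ρ • nor X ρ
        = ds X (fun q => ds X (curv X) q • nor X q - ((1/2) * curv X q ^ 2) • ds X X q) ρ) := by
  have hX' : ContDiff ℝ ∞ X := hX.of_le (by simp)
  have key : ∀ ρ : ℝ,
      ds X (fun q => ds X (curv X) q • nor X q - ((1/2) * curv X q ^ 2) • ds X X q) ρ
        = (ds X (ds X (curv X)) ρ + (1/2) * curv X ρ ^ 3) • nor X ρ := by
    intro ρ
    have hκ : ContDiff ℝ ∞ (curv X) := smooth_curv X hX' hreg
    have ha : ContDiff ℝ ∞ (ds X (curv X)) := smooth_ds X hX' hreg hκ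
    have ha' := hasDerivAt_of_smooth ha ρ
    have hn' := hasDerivAt_nor X hX' hreg ρ
    have hκ' := hasDerivAt_of_smooth hκ ρ
    have hτ' := hasDerivAt_of_smooth (smooth_tau X hX' hreg) ρ
    have hb' : HasDerivAt (fun q => (1/2) * curv X q ^ 2) (curv X ρ * deriv (curv X) ρ) ρ := by
      have := (hκ'.fun_pow 2).const_mul (1/2 : ℝ)
      refine this.congr_deriv ?_
      ring
    have H : HasDerivAt
        (fun q => ds X (curv X) q • nor X q - ((1/2) * curv X q ^ 2) • ds X X q)
        ((ds X (curv X) ρ • (-(perp (deriv (tau X) ρ))) + deriv (ds X (curv X)) ρ • nor X ρ)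
          - (((1/2) * curv X ρ ^ 2) • deriv (tau X) ρ
              + (curv X ρ * deriv (curv X) ρ) • tau X ρ)) ρ :=
      (ha'.smul hn').sub (hb'.smul hτ')
    set L := ‖deriv X ρ‖ with hLdef
    have hL : L ≠ 0 := norm_ne_zero_iff.mpr (hreg ρ)
    have hgL : L⁻¹ * L = 1 := inv_mul_cancel₀ hL
    have hτ'eq : deriv (tau X) ρ = L • ((-(curv X ρ)) • nor X ρ) := by
      have h : L⁻¹ • deriv (tau X) ρ = -(curv X ρ) • nor X ρ := ds_tau_eq X hX' hreg ρ
      calc deriv (tau X) ρ = L • (L⁻¹ • deriv (tau X) ρ) := by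
            rw [smul_smul, mul_inv_cancel₀ hL, one_smul]
        _ = L • ((-(curv X ρ)) • nor X ρ) := by rw [h]
    have hn'eq : -(perp (deriv (tau X) ρ)) = L • (curv X ρ • tau X ρ) := by
      have h : L⁻¹ • (-(perp (deriv (tau X) ρ))) = curv X ρ • tau X ρ := by
        have h2 := ds_nor_eq X hX' hreg ρ
        rw [ds, hn'.deriv] at h2
        exact h2
      calc -(perp (deriv (tau X) ρ)) = L • (L⁻¹ • (-(perp (deriv (tau X) ρ)))) := by
            rw [smul_smul, mul_inv_cancel₀ hL, one_smul]
        _ = L • (curv X ρ • tau X ρ) := by rw [h]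
    have ea : ds X (curv X) ρ = L⁻¹ * deriv (curv X) ρ := rfl
    have eA : ds X (ds X (curv X)) ρ = L⁻¹ * deriv (ds X (curv X)) ρ := rfl
    have expand : ds X (fun q => ds X (curv X) q • nor X q
        - ((1/2) * curv X q ^ 2) • ds X X q) ρ
        = L⁻¹ • deriv (fun q => ds X (curv X) q • nor X q
            - ((1/2) * curv X q ^ 2) • ds X X q) ρ := rfl
    rw [expand, H.deriv, hn'eq, hτ'eq, eA, ea]
    show L⁻¹ • _ = _ • nor X ρ
    have htau : (fun q => ds X X q) ρ = tau X ρ := rfl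
    match_scalars
    · field_simp
      ring
    · field_simp
      ring
  refine ⟨key, fun ρ => ?_⟩
  rw [key ρ, willV]

end
end

section
/- Let X : ℝ × ℝ → ℝ² be a smooth map with ∂_ρX(ρ,t) ≠ 0 for all (ρ,t); define ∂_s f := (1/‖∂_ρX‖) ∂_ρ f (at each fixed t), τ := ∂_s X, n := −τ^⊥ where (u₁,u₂)^⊥ := (−u₂,u₁), and κ := −n · ∂_s(∂_s X). Then the time derivative of the curvature satisfies ∂_t κ = −∂_s( n · ∂_s(∂_t X) ) − ( ∂_s X · ∂_s(∂_t X) ) κ at every (ρ,t). (Lemma 2.2) -/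
noncomputable section

/-- Arc-length derivative (at each fixed time `t`) along the evolving curve
parameterized by `X`: `∂ₛ f := (1/‖∂_ρ X‖) ∂_ρ f`. -/
def dsT (X : ℝ → ℝ → E2) {F : Type*} [NormedAddCommGroup F] [NormedSpace ℝ F]
    (f : ℝ → ℝ → F) (ρ t : ℝ) : F :=
  ‖deriv (fun q => X q t) ρ‖⁻¹ • deriv (fun q => f q t) ρ

/-- Time derivative `∂_t f`. -/
def dt {F : Type*} [NormedAddCommGroup F] [NormedSpace ℝ F]
    (f : ℝ → ℝ → F) (ρ t : ℝ) : F := deriv (f ρ) t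

/-- Unit tangent `τ := ∂ₛ X`. -/
def tauT (X : ℝ → ℝ → E2) (ρ t : ℝ) : E2 := dsT X X ρ t

/-- Outward unit normal `n := −τ^⊥`. -/
def norT (X : ℝ → ℝ → E2) (ρ t : ℝ) : E2 := -perp (tauT X ρ t)

/-- Curvature `κ := −n · ∂ₛ(∂ₛ X)`. -/
def curvT (X : ℝ → ℝ → E2) (ρ t : ℝ) : ℝ :=
  -(inner ℝ (norT X ρ t) (dsT X (dsT X X) ρ t) : ℝ)

/-- Willmore normal velocity `V := ∂ₛ(∂ₛ κ) + (1/2) κ³`. -/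
def willVT (X : ℝ → ℝ → E2) (ρ t : ℝ) : ℝ :=
  dsT X (dsT X (curvT X)) ρ t + (1/2) * curvT X ρ t ^ 3

open scoped RealInnerProductSpace

namespace DtCurvAux

section Rules

variable {F : Type*} [NormedAddCommGroup F] [NormedSpace ℝ F]

/-- partial derivative in the first variable -/
def D1 (f : ℝ × ℝ → F) (p : ℝ × ℝ) : F := deriv (fun q => f (q, p.2)) p.1

/-- partial derivative in the second variable -/
def D2 (f : ℝ × ℝ → F) (p : ℝ × ℝ) : F := deriv (fun s => f (p.1, s)) p.2

lemma contDiff_sec1 {f : ℝ × ℝ → F} (hf : ContDiff ℝ (⊤:ℕ∞) f) (t : ℝ) :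
    ContDiff ℝ (⊤:ℕ∞) (fun q => f (q, t)) := hf.comp (contDiff_id.prodMk contDiff_const)

lemma contDiff_sec2 {f : ℝ × ℝ → F} (hf : ContDiff ℝ (⊤:ℕ∞) f) (ρ : ℝ) :
    ContDiff ℝ (⊤:ℕ∞) (fun s => f (ρ, s)) := hf.comp (contDiff_const.prodMk contDiff_id)

lemma diff1 {f : ℝ × ℝ → F} (hf : ContDiff ℝ (⊤:ℕ∞) f) (ρ t : ℝ) :
    DifferentiableAt ℝ (fun q => f (q, t)) ρ :=
  (contDiff_sec1 hf t).differentiable (by simp) ρ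

lemma diff2 {f : ℝ × ℝ → F} (hf : ContDiff ℝ (⊤:ℕ∞) f) (ρ t : ℝ) :
    DifferentiableAt ℝ (fun s => f (ρ, s)) t :=
  (contDiff_sec2 hf ρ).differentiable (by simp) t

lemma sec1_hasDerivAt {f : ℝ × ℝ → F} (hf : ContDiff ℝ (⊤:ℕ∞) f) (p : ℝ × ℝ) :
    HasDerivAt (fun q => f (q, p.2)) (D1 f p) p.1 :=
  (diff1 hf p.1 p.2).hasDerivAt

lemma sec2_hasDerivAt {f : ℝ × ℝ → F} (hf : ContDiff ℝ (⊤:ℕ∞) f) (p : ℝ × ℝ) :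
    HasDerivAt (fun s => f (p.1, s)) (D2 f p) p.2 :=
  (diff2 hf p.1 p.2).hasDerivAt

lemma hasD1 {p : ℝ × ℝ} {f : ℝ × ℝ → F} (hf : DifferentiableAt ℝ f p) :
    HasDerivAt (fun q => f (q, p.2)) (fderiv ℝ f p ((1 : ℝ), (0 : ℝ))) p.1 := by
  have h1 : HasFDerivAt (fun q : ℝ => (q, p.2)) ((ContinuousLinearMap.id ℝ ℝ).prod 0) p.1 :=
    (hasFDerivAt_id _).prodMk (hasFDerivAt_const _ _)
  have h2 := (hf.hasFDerivAt.comp p.1 (by simpa using h1))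
  have := h2.hasDerivAt
  simpa [Function.comp_def] using this

lemma hasD2 {p : ℝ × ℝ} {f : ℝ × ℝ → F} (hf : DifferentiableAt ℝ f p) :
    HasDerivAt (fun s => f (p.1, s)) (fderiv ℝ f p ((0 : ℝ), (1 : ℝ))) p.2 := by
  have h1 : HasFDerivAt (fun s : ℝ => (p.1, s))
      (ContinuousLinearMap.prod 0 (ContinuousLinearMap.id ℝ ℝ)) p.2 :=
    (hasFDerivAt_const _ _).prodMk (hasFDerivAt_id _)
  have h2 := (hf.hasFDerivAt.comp p.2 (by simpa using h1))
  have := h2.hasDerivAt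
  simpa [Function.comp_def] using this

lemma D1_eq_fderiv {f : ℝ × ℝ → F} (hf : Differentiable ℝ f) :
    D1 f = fun p => fderiv ℝ f p ((1 : ℝ), (0 : ℝ)) :=
  funext fun p => (hasD1 (hf p)).deriv

lemma D2_eq_fderiv {f : ℝ × ℝ → F} (hf : Differentiable ℝ f) :
    D2 f = fun p => fderiv ℝ f p ((0 : ℝ), (1 : ℝ)) :=
  funext fun p => (hasD2 (hf p)).deriv

lemma contDiff_D1 {f : ℝ × ℝ → F} (hf : ContDiff ℝ (⊤:ℕ∞) f) : ContDiff ℝ (⊤:ℕ∞) (D1 f) := by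
  rw [D1_eq_fderiv (hf.differentiable (by simp))]
  exact ((contDiff_infty_iff_fderiv.mp hf).2).clm_apply contDiff_const

lemma contDiff_D2 {f : ℝ × ℝ → F} (hf : ContDiff ℝ (⊤:ℕ∞) f) : ContDiff ℝ (⊤:ℕ∞) (D2 f) := by
  rw [D2_eq_fderiv (hf.differentiable (by simp))]
  exact ((contDiff_infty_iff_fderiv.mp hf).2).clm_apply contDiff_const

lemma D_apply_vec {f : ℝ × ℝ → F} (hf : ContDiff ℝ (⊤:ℕ∞) f) (v : ℝ × ℝ) (p : ℝ × ℝ) :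
    HasFDerivAt (fun p => fderiv ℝ f p v) ((fderiv ℝ (fderiv ℝ f) p).flip v) p := by
  have hB : HasFDerivAt (fderiv ℝ f) (fderiv ℝ (fderiv ℝ f) p) p :=
    (((contDiff_infty_iff_fderiv.mp hf).2).differentiable (by simp) p).hasFDerivAt
  have := hB.clm_apply (hasFDerivAt_const v p)
  simpa using this

lemma D1D2_symm {f : ℝ × ℝ → F} (hf : ContDiff ℝ (⊤:ℕ∞) f) : D1 (D2 f) = D2 (D1 f) := by
  have hdf : Differentiable ℝ f := hf.differentiable (by simp)
  have hfd : ContDiff ℝ (⊤:ℕ∞) (fun p => fderiv ℝ f p) := (contDiff_infty_iff_fderiv.mp hf).2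
  funext p
  have h2 : D2 f = fun p => fderiv ℝ f p ((0:ℝ), (1:ℝ)) := D2_eq_fderiv hdf
  have h1 : D1 f = fun p => fderiv ℝ f p ((1:ℝ), (0:ℝ)) := D1_eq_fderiv hdf
  have e1 : D1 (D2 f) p = fderiv ℝ (fderiv ℝ f) p ((1:ℝ),(0:ℝ)) ((0:ℝ),(1:ℝ)) := by
    rw [h2, D1]
    have := (hasD1 (f := fun p => fderiv ℝ f p ((0:ℝ),(1:ℝ))) (p := p)
      ((D_apply_vec hf ((0:ℝ),(1:ℝ)) p).differentiableAt)).deriv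
    rw [this, (D_apply_vec hf ((0:ℝ),(1:ℝ)) p).fderiv]
    rfl
  have e2 : D2 (D1 f) p = fderiv ℝ (fderiv ℝ f) p ((0:ℝ),(1:ℝ)) ((1:ℝ),(0:ℝ)) := by
    rw [h1, D2]
    have := (hasD2 (f := fun p => fderiv ℝ f p ((1:ℝ),(0:ℝ))) (p := p)
      ((D_apply_vec hf ((1:ℝ),(0:ℝ)) p).differentiableAt)).deriv
    rw [this, (D_apply_vec hf ((1:ℝ),(0:ℝ)) p).fderiv]
    rfl
  rw [e1, e2]
  exact second_derivative_symmetric (fun y => (hdf y).hasFDerivAt)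
    ((hfd.differentiable (by simp) p).hasFDerivAt) _ _

-- pointwise rules
lemma D1_smul {a : ℝ × ℝ → ℝ} {w : ℝ × ℝ → F} (ha : ContDiff ℝ (⊤:ℕ∞) a)
    (hw : ContDiff ℝ (⊤:ℕ∞) w) (p : ℝ × ℝ) :
    D1 (fun p => a p • w p) p = a p • D1 w p + D1 a p • w p :=
  ((sec1_hasDerivAt ha p).smul (sec1_hasDerivAt hw p)).deriv

lemma D2_smul {a : ℝ × ℝ → ℝ} {w : ℝ × ℝ → F} (ha : ContDiff ℝ (⊤:ℕ∞) a)
    (hw : ContDiff ℝ (⊤:ℕ∞) w) (p : ℝ × ℝ) :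
    D2 (fun p => a p • w p) p = a p • D2 w p + D2 a p • w p :=
  ((sec2_hasDerivAt ha p).smul (sec2_hasDerivAt hw p)).deriv

lemma D1_mul {a b : ℝ × ℝ → ℝ} (ha : ContDiff ℝ (⊤:ℕ∞) a)
    (hb : ContDiff ℝ (⊤:ℕ∞) b) (p : ℝ × ℝ) :
    D1 (fun p => a p * b p) p = D1 a p * b p + a p * D1 b p :=
  ((sec1_hasDerivAt ha p).mul (sec1_hasDerivAt hb p)).deriv

lemma D2_mul {a b : ℝ × ℝ → ℝ} (ha : ContDiff ℝ (⊤:ℕ∞) a)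
    (hb : ContDiff ℝ (⊤:ℕ∞) b) (p : ℝ × ℝ) :
    D2 (fun p => a p * b p) p = D2 a p * b p + a p * D2 b p :=
  ((sec2_hasDerivAt ha p).mul (sec2_hasDerivAt hb p)).deriv

lemma D2_inv {a : ℝ × ℝ → ℝ} (ha : ContDiff ℝ (⊤:ℕ∞) a) (p : ℝ × ℝ) (h : a p ≠ 0) :
    D2 (fun p => (a p)⁻¹) p = -(D2 a p) / (a p) ^ 2 :=
  ((sec2_hasDerivAt ha p).inv h).deriv

lemma D1_inner {u w : ℝ × ℝ → E2} (hu : ContDiff ℝ (⊤:ℕ∞) u)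
    (hw : ContDiff ℝ (⊤:ℕ∞) w) (p : ℝ × ℝ) :
    D1 (fun p => ⟪u p, w p⟫) p = ⟪u p, D1 w p⟫ + ⟪D1 u p, w p⟫ :=
  ((sec1_hasDerivAt hu p).inner ℝ (sec1_hasDerivAt hw p)).deriv

lemma D2_inner {u w : ℝ × ℝ → E2} (hu : ContDiff ℝ (⊤:ℕ∞) u)
    (hw : ContDiff ℝ (⊤:ℕ∞) w) (p : ℝ × ℝ) :
    D2 (fun p => ⟪u p, w p⟫) p = ⟪u p, D2 w p⟫ + ⟪D2 u p, w p⟫ :=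
  ((sec2_hasDerivAt hu p).inner ℝ (sec2_hasDerivAt hw p)).deriv

lemma D2_neg {f : ℝ × ℝ → ℝ} (p : ℝ × ℝ) :
    D2 (fun p => -(f p)) p = -(D2 f p) := by
  simp [D2, deriv.neg]

lemma D2_clm {w : ℝ × ℝ → E2} (L : E2 →L[ℝ] E2) (hw : ContDiff ℝ (⊤:ℕ∞) w) (p : ℝ × ℝ) :
    D2 (fun p => L (w p)) p = L (D2 w p) :=
  (L.hasFDerivAt.comp_hasDerivAt p.2 (sec2_hasDerivAt hw p)).deriv

end Rules

-- perp algebra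
lemma perp_apply0 (u : E2) : perp u 0 = -(u 1) := by simp [perp]

lemma perp_apply1 (u : E2) : perp u 1 = u 0 := by simp [perp]

lemma inner_eq (u w : E2) : ⟪u, w⟫ = u 0 * w 0 + u 1 * w 1 := by
  simp [PiLp.inner_apply, Fin.sum_univ_two, RCLike.inner_apply, conj_trivial, mul_comm]

def perpL : E2 →L[ℝ] E2 :=
  LinearMap.toContinuousLinearMap
    { toFun := perp
      map_add' := by
        intro u w; ext i; fin_cases i <;>
          simp [perp_apply0, perp_apply1, PiLp.add_apply]
        ring
      map_smul' := by
        intro c u; ext i; fin_cases i <;>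
          simp [perp_apply0, perp_apply1, PiLp.smul_apply, smul_eq_mul] }

lemma perpL_apply (u : E2) : perpL u = perp u := rfl

lemma perp_perp (u : E2) : perp (perp u) = -u := by
  ext i; fin_cases i <;> simp [perp_apply0, perp_apply1, PiLp.neg_apply]

lemma inner_perp_self (u : E2) : ⟪perp u, u⟫ = 0 := by
  simp [inner_eq, perp_apply0, perp_apply1]; ring

lemma inner_perp_perp (u w : E2) : ⟪perp u, perp w⟫ = ⟪u, w⟫ := by
  simp [inner_eq, perp_apply0, perp_apply1]; ring

lemma decomp2 {τ : E2} (hτ : ⟪τ, τ⟫ = 1) (w : E2) :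
    w = ⟪τ, w⟫ • τ + ⟪-perp τ, w⟫ • (-perp τ) := by
  have h : τ 0 * τ 0 + τ 1 * τ 1 = 1 := by rw [← inner_eq]; exact hτ
  ext i; fin_cases i
  · simp [inner_eq, perp_apply0, perp_apply1, PiLp.add_apply, PiLp.smul_apply,
      PiLp.neg_apply, smul_eq_mul]
    linear_combination (-(w 0)) * h
  · simp [inner_eq, perp_apply0, perp_apply1, PiLp.add_apply, PiLp.smul_apply,
      PiLp.neg_apply, smul_eq_mul]
    linear_combination (-(w 1)) * h

section Evolving

variable (Fu : ℝ × ℝ → E2)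

/-- uncurried arclength derivative operator -/
def Sv {F : Type*} [NormedAddCommGroup F] [NormedSpace ℝ F]
    (f : ℝ × ℝ → F) (p : ℝ × ℝ) : F := ‖D1 Fu p‖⁻¹ • D1 f p

variable {Fu}

lemma contDiff_G (hF : ContDiff ℝ (⊤:ℕ∞) Fu) (hv : ∀ p, D1 Fu p ≠ 0) : ContDiff ℝ (⊤:ℕ∞) (fun p => ‖D1 Fu p‖) :=
  ContDiff.norm (𝕜 := ℝ) (contDiff_D1 hF) hv

lemma G_ne (hv : ∀ p, D1 Fu p ≠ 0) (p : ℝ × ℝ) : ‖D1 Fu p‖ ≠ 0 := norm_ne_zero_iff.mpr (hv p)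

lemma contDiff_Ginv (hF : ContDiff ℝ (⊤:ℕ∞) Fu) (hv : ∀ p, D1 Fu p ≠ 0) : ContDiff ℝ (⊤:ℕ∞) (fun p => ‖D1 Fu p‖⁻¹) :=
  (contDiff_G hF hv).inv (G_ne hv)

lemma contDiff_Sv (hF : ContDiff ℝ (⊤:ℕ∞) Fu) (hv : ∀ p, D1 Fu p ≠ 0)
    {F : Type*} [NormedAddCommGroup F] [NormedSpace ℝ F]
    {f : ℝ × ℝ → F} (hf : ContDiff ℝ (⊤:ℕ∞) f) : ContDiff ℝ (⊤:ℕ∞) (Sv Fu f) :=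
  (contDiff_Ginv hF hv).smul (contDiff_D1 hf)

/-- derivative of the metric factor -/
lemma D2_G (hF : ContDiff ℝ (⊤:ℕ∞) Fu) (hv : ∀ p, D1 Fu p ≠ 0) (p : ℝ × ℝ) :
    D2 (fun p => ‖D1 Fu p‖) p = ⟪D1 Fu p, D2 (D1 Fu) p⟫ / ‖D1 Fu p‖ := by
  have hvC : ContDiff ℝ (⊤:ℕ∞) (D1 Fu) := contDiff_D1 hF
  have hGC : ContDiff ℝ (⊤:ℕ∞) (fun p => ‖D1 Fu p‖) := contDiff_G hF hv
  have h1 : (fun p => ‖D1 Fu p‖ * ‖D1 Fu p‖) = fun p => ⟪D1 Fu p, D1 Fu p⟫ :=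
    funext fun p => (real_inner_self_eq_norm_mul_norm (D1 Fu p)).symm
  have e1 : D2 (fun p => ‖D1 Fu p‖ * ‖D1 Fu p‖) p
      = D2 (fun p => ‖D1 Fu p‖) p * ‖D1 Fu p‖ + ‖D1 Fu p‖ * D2 (fun p => ‖D1 Fu p‖) p :=
    D2_mul hGC hGC p
  have e2 : D2 (fun p => ⟪D1 Fu p, D1 Fu p⟫) p
      = ⟪D1 Fu p, D2 (D1 Fu) p⟫ + ⟪D2 (D1 Fu) p, D1 Fu p⟫ := D2_inner hvC hvC p
  rw [h1, e2] at e1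
  have hne := G_ne hv p
  have hcomm : ⟪D2 (D1 Fu) p, D1 Fu p⟫ = ⟪D1 Fu p, D2 (D1 Fu) p⟫ := real_inner_comm _ _
  rw [hcomm] at e1
  rw [eq_div_iff hne]
  linarith

end Evolving

section Evolving2

variable {Fu : ℝ × ℝ → E2}

lemma Sv_commutator (hF : ContDiff ℝ (⊤:ℕ∞) Fu) (hv : ∀ p, D1 Fu p ≠ 0)
    {F : Type*} [NormedAddCommGroup F] [NormedSpace ℝ F] {f : ℝ × ℝ → F}
    (hf : ContDiff ℝ (⊤:ℕ∞) f) (p : ℝ × ℝ) :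
    D2 (Sv Fu f) p
      = Sv Fu (D2 f) p - ⟪Sv Fu Fu p, Sv Fu (D2 Fu) p⟫ • Sv Fu f p := by
  have hGC := contDiff_G hF hv
  have hGinv := contDiff_Ginv hF hv
  have hD1f := contDiff_D1 hf
  have hne := G_ne hv p
  have e0 : D2 (Sv Fu f) p
      = ‖D1 Fu p‖⁻¹ • D2 (D1 f) p + D2 (fun p => ‖D1 Fu p‖⁻¹) p • D1 f p :=
    D2_smul hGinv hD1f p
  have e1 : D2 (fun p => ‖D1 Fu p‖⁻¹) p
      = -(D2 (fun p => ‖D1 Fu p‖) p) / ‖D1 Fu p‖ ^ 2 := D2_inv hGC p hne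
  have e2 : D2 (fun p => ‖D1 Fu p‖) p = ⟪D1 Fu p, D2 (D1 Fu) p⟫ / ‖D1 Fu p‖ :=
    D2_G hF hv p
  have e3 : D2 (D1 f) p = D1 (D2 f) p := by rw [← D1D2_symm hf]
  have e4 : D2 (D1 Fu) p = D1 (D2 Fu) p := by rw [← D1D2_symm hF]
  have e5 : ⟪Sv Fu Fu p, Sv Fu (D2 Fu) p⟫
      = (‖D1 Fu p‖⁻¹ * ‖D1 Fu p‖⁻¹) * ⟪D1 Fu p, D1 (D2 Fu) p⟫ := by
    simp only [Sv, real_inner_smul_left, real_inner_smul_right]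
    ring
  rw [e0, e1, e2, e3, e4, e5]
  show ‖D1 Fu p‖⁻¹ • D1 (D2 f) p
      + (-(⟪D1 Fu p, D1 (D2 Fu) p⟫ / ‖D1 Fu p‖) / ‖D1 Fu p‖ ^ 2) • D1 f p
    = ‖D1 Fu p‖⁻¹ • D1 (D2 f) p
      - (‖D1 Fu p‖⁻¹ * ‖D1 Fu p‖⁻¹ * ⟪D1 Fu p, D1 (D2 Fu) p⟫) • (‖D1 Fu p‖⁻¹ • D1 f p)
  rw [smul_smul, sub_eq_add_neg, ← neg_smul]
  congr 1
  ring

lemma Sv_smul (hF : ContDiff ℝ (⊤:ℕ∞) Fu)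
    {a : ℝ × ℝ → ℝ} {w : ℝ × ℝ → E2} (ha : ContDiff ℝ (⊤:ℕ∞) a)
    (hw : ContDiff ℝ (⊤:ℕ∞) w) (p : ℝ × ℝ) :
    Sv Fu (fun p => a p • w p) p = (Sv Fu a p) • w p + a p • Sv Fu w p := by
  show ‖D1 Fu p‖⁻¹ • D1 (fun p => a p • w p) p = _
  rw [D1_smul ha hw p]
  show ‖D1 Fu p‖⁻¹ • (a p • D1 w p + D1 a p • w p)
      = (‖D1 Fu p‖⁻¹ • D1 a p) • w p + a p • (‖D1 Fu p‖⁻¹ • D1 w p)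
  simp only [smul_add, smul_smul, smul_eq_mul]
  rw [add_comm]
  ring_nf

lemma orthog_D1 {u : ℝ × ℝ → E2} (hu : ContDiff ℝ (⊤:ℕ∞) u)
    (h1 : ∀ p, ⟪u p, u p⟫ = 1) (p : ℝ × ℝ) : ⟪u p, D1 u p⟫ = 0 := by
  have e := D1_inner hu hu p
  have hc : (fun p => ⟪u p, u p⟫) = fun _ => (1:ℝ) := funext h1
  rw [hc] at e
  have e0 : D1 (fun _ : ℝ × ℝ => (1:ℝ)) p = 0 := by simp [D1]
  rw [e0] at e
  have := real_inner_comm (u p) (D1 u p)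
  linarith [e, this]

lemma orthog_D2 {u : ℝ × ℝ → E2} (hu : ContDiff ℝ (⊤:ℕ∞) u)
    (h1 : ∀ p, ⟪u p, u p⟫ = 1) (p : ℝ × ℝ) : ⟪u p, D2 u p⟫ = 0 := by
  have e := D2_inner hu hu p
  have hc : (fun p => ⟪u p, u p⟫) = fun _ => (1:ℝ) := funext h1
  rw [hc] at e
  have e0 : D2 (fun _ : ℝ × ℝ => (1:ℝ)) p = 0 := by simp [D2]
  rw [e0] at e
  have := real_inner_comm (u p) (D2 u p)
  linarith [e, this]

lemma orthog_Sv {u : ℝ × ℝ → E2} (hu : ContDiff ℝ (⊤:ℕ∞) u)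
    (h1 : ∀ p, ⟪u p, u p⟫ = 1) (p : ℝ × ℝ) : ⟪u p, Sv Fu u p⟫ = 0 := by
  show ⟪u p, ‖D1 Fu p‖⁻¹ • D1 u p⟫ = 0
  rw [real_inner_smul_right, orthog_D1 hu h1 p, mul_zero]

/-- unit tangent -/
lemma tau_unit (hv : ∀ p, D1 Fu p ≠ 0) (p : ℝ × ℝ) : ⟪Sv Fu Fu p, Sv Fu Fu p⟫ = 1 := by
  have hne := G_ne hv p
  show ⟪‖D1 Fu p‖⁻¹ • D1 Fu p, ‖D1 Fu p‖⁻¹ • D1 Fu p⟫ = 1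
  rw [real_inner_smul_left, real_inner_smul_right, real_inner_self_eq_norm_mul_norm]
  field_simp

end Evolving2

lemma perp_neg (u : E2) : perp (-u) = -perp u := by
  ext i; fin_cases i <;> simp [perp_apply0, perp_apply1, PiLp.neg_apply]

lemma perp_smul (c : ℝ) (u : E2) : perp (c • u) = c • perp u := by
  ext i; fin_cases i <;>
    simp [perp_apply0, perp_apply1, PiLp.smul_apply, smul_eq_mul, mul_neg]

section Geometry

variable {Fu : ℝ × ℝ → E2}

/-- outward unit normal, uncurried -/
def norv (Fu : ℝ × ℝ → E2) (p : ℝ × ℝ) : E2 := -perp (Sv Fu Fu p)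

/-- curvature, uncurried -/
def curvv (Fu : ℝ × ℝ → E2) (p : ℝ × ℝ) : ℝ := -⟪norv Fu p, Sv Fu (Sv Fu Fu) p⟫

lemma D2_neg' {F : Type*} [NormedAddCommGroup F] [NormedSpace ℝ F]
    {w : ℝ × ℝ → F} (p : ℝ × ℝ) : D2 (fun p => -(w p)) p = -(D2 w p) := by
  simp [D2, deriv.neg]

theorem main_aux (hF : ContDiff ℝ (⊤:ℕ∞) Fu) (hv : ∀ p, D1 Fu p ≠ 0) (p : ℝ × ℝ) :
    D2 (curvv Fu) p
      = -(Sv Fu (fun p => ⟪norv Fu p, Sv Fu (D2 Fu) p⟫) p)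
        - ⟪Sv Fu Fu p, Sv Fu (D2 Fu) p⟫ * curvv Fu p := by
  have hτC : ContDiff ℝ (⊤:ℕ∞) (Sv Fu Fu) := contDiff_Sv hF hv hF
  have hNfun : norv Fu = fun p => -(perpL (Sv Fu Fu p)) := rfl
  have hNC : ContDiff ℝ (⊤:ℕ∞) (norv Fu) := by
    rw [hNfun]; exact (perpL.contDiff.comp hτC).neg
  have hmC : ContDiff ℝ (⊤:ℕ∞) (Sv Fu (D2 Fu)) := contDiff_Sv hF hv (contDiff_D2 hF)
  have hSτC : ContDiff ℝ (⊤:ℕ∞) (Sv Fu (Sv Fu Fu)) := contDiff_Sv hF hv hτC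
  have hτunit := tau_unit hv
  have hNunit : ∀ p, ⟪norv Fu p, norv Fu p⟫ = 1 := fun p => by
    show ⟪-perp (Sv Fu Fu p), -perp (Sv Fu Fu p)⟫ = 1
    rw [inner_neg_neg, inner_perp_perp]
    exact hτunit p
  have hτSτ : ∀ p, ⟪Sv Fu Fu p, Sv Fu (Sv Fu Fu) p⟫ = 0 := fun p =>
    orthog_Sv hτC hτunit p
  have hNSN : ∀ p, ⟪norv Fu p, Sv Fu (norv Fu) p⟫ = 0 := fun p =>
    orthog_Sv hNC hNunit p
  have hNSτ : ∀ p, ⟪norv Fu p, Sv Fu (Sv Fu Fu) p⟫ = -(curvv Fu p) := fun p => by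
    simp [curvv]
  set φf : ℝ × ℝ → ℝ := fun p => ⟪norv Fu p, Sv Fu (D2 Fu) p⟫ with hφf
  have hφC : ContDiff ℝ (⊤:ℕ∞) φf := ContDiff.inner ℝ hNC hmC
  have hdec : ∀ p, Sv Fu (D2 Fu) p
      = ⟪Sv Fu Fu p, Sv Fu (D2 Fu) p⟫ • Sv Fu Fu p + φf p • norv Fu p := fun p => by
    have h := decomp2 (hτunit p) (Sv Fu (D2 Fu) p)
    exact h
  have hD2τ : ∀ p, D2 (Sv Fu Fu) p = φf p • norv Fu p := fun p => by
    have h := Sv_commutator hF hv hF p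
    rw [h]
    nth_rewrite 1 [hdec p]
    abel
  have hSτ_eq : Sv Fu (Sv Fu Fu) p = (-(curvv Fu p)) • norv Fu p := by
    have h := decomp2 (hτunit p) (Sv Fu (Sv Fu Fu) p)
    rw [hτSτ p, zero_smul, zero_add] at h
    rw [← hNSτ p]
    exact h
  have hperpN : perp (norv Fu p) = Sv Fu Fu p := by
    show perp (-perp (Sv Fu Fu p)) = _
    rw [perp_neg, perp_perp, neg_neg]
  have hD2N : D2 (norv Fu) p = (-(φf p)) • Sv Fu Fu p := by
    have h1 : D2 (norv Fu) p = -(perpL (D2 (Sv Fu Fu) p)) := by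
      rw [hNfun, D2_neg' p, D2_clm perpL hτC p]
    rw [h1, hD2τ p]
    show -(perp (φf p • norv Fu p)) = _
    rw [perp_smul, hperpN, neg_smul]
  -- assemble
  have stepA : D2 (curvv Fu) p
      = -(⟪norv Fu p, D2 (Sv Fu (Sv Fu Fu)) p⟫ + ⟪D2 (norv Fu) p, Sv Fu (Sv Fu Fu) p⟫) := by
    have h0 : curvv Fu = fun p => -(⟪norv Fu p, Sv Fu (Sv Fu Fu) p⟫) := rfl
    rw [h0, D2_neg, D2_inner hNC hSτC p]
  have stepB : ⟪D2 (norv Fu) p, Sv Fu (Sv Fu Fu) p⟫ = 0 := by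
    rw [hD2N, real_inner_smul_left, hτSτ p, mul_zero]
  have eS : Sv Fu (D2 (Sv Fu Fu)) p
      = (Sv Fu φf p) • norv Fu p + φf p • Sv Fu (norv Fu) p := by
    have h := funext hD2τ
    rw [h]
    exact Sv_smul hF hφC hNC p
  have eC := Sv_commutator hF hv hτC p
  have eInner : ⟪norv Fu p, D2 (Sv Fu (Sv Fu Fu)) p⟫
      = Sv Fu φf p + ⟪Sv Fu Fu p, Sv Fu (D2 Fu) p⟫ * curvv Fu p := by
    rw [eC, inner_sub_right, eS, inner_add_right, real_inner_smul_right,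
      real_inner_smul_right, real_inner_smul_right, hNunit p, hNSN p, hNSτ p]
    ring
  rw [stepA, stepB, eInner]
  ring

end Geometry

end DtCurvAux


/-- Lemma 2.2: the time derivative of the curvature satisfies
`∂_t κ = −∂ₛ(n · ∂ₛ(∂_t X)) − (∂ₛX · ∂ₛ(∂_t X)) κ`. -/
theorem dt_curvature (X : ℝ → ℝ → E2)
    (hX : ContDiff ℝ (⊤ : ℕ∞) (fun p : ℝ × ℝ => X p.1 p.2))
    (hreg : ∀ ρ t : ℝ, deriv (fun q => X q t) ρ ≠ 0) :
    ∀ ρ t : ℝ,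
      dt (curvT X) ρ t
        = -dsT X (fun q s => (inner ℝ (norT X q s) (dsT X (dt X) q s) : ℝ)) ρ t
          - (inner ℝ (dsT X X ρ t) (dsT X (dt X) ρ t) : ℝ) * curvT X ρ t := by
  intro ρ t
  have hF : ContDiff ℝ (⊤:ℕ∞) (fun p : ℝ × ℝ => X p.1 p.2) := hX.of_le (by simp)
  have hv : ∀ p : ℝ × ℝ, DtCurvAux.D1 (fun p : ℝ × ℝ => X p.1 p.2) p ≠ 0 :=
    fun p => hreg p.1 p.2
  exact DtCurvAux.main_aux hF hv (ρ, t)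
end
end

section
/- Let X : ℝ × ℝ → ℝ² be a smooth map with ∂_ρX(ρ,t) ≠ 0 for all (ρ,t); define ∂_s f := (1/‖∂_ρX‖) ∂_ρ f (at each fixed t), τ := ∂_s X, n := −τ^⊥ where (u₁,u₂)^⊥ := (−u₂,u₁), κ := −n · ∂_s(∂_s X), and V := ∂_s(∂_s κ) + (1/2)κ³. Suppose X solves the Willmore flow: ∂_t X = V n at every (ρ,t). Then (X, V, κ) satisfies the new geometric PDE: (i) n · ∂_t X = V; (ii) V n = ∂_s( (∂_s κ) n − (1/2)κ² ∂_s X ); (iii) ∂_t κ = −∂_s( n · ∂_s(∂_t X) ) − ( ∂_s X · ∂_s(∂_t X) ) κ, at every (ρ,t). (System (2.12)) -/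
noncomputable section

noncomputable section
namespace WillmoreAux

def dr {F : Type*} [NormedAddCommGroup F] [NormedSpace ℝ F]
    (f : ℝ → ℝ → F) (ρ t : ℝ) : F := deriv (fun q => f q t) ρ

def SM {F : Type*} [NormedAddCommGroup F] [NormedSpace ℝ F] (f : ℝ → ℝ → F) : Prop :=
  ContDiff ℝ ((⊤ : ℕ∞) : WithTop ℕ∞) (fun p : ℝ × ℝ => f p.1 p.2)

variable {F : Type*} [NormedAddCommGroup F] [NormedSpace ℝ F] {f : ℝ → ℝ → F}

theorem SM.hasDerivAt_dr (hf : SM f) (ρ t : ℝ) :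
    HasDerivAt (fun q => f q t)
      (fderiv ℝ (fun p : ℝ × ℝ => f p.1 p.2) (ρ, t) (1, 0)) ρ := by
  have h1 : HasDerivAt (fun q : ℝ => ((q, t) : ℝ × ℝ)) (1, 0) ρ :=
    (hasDerivAt_id ρ).prodMk (hasDerivAt_const ρ t)
  exact ((hf.differentiable (by simp)) (ρ, t)).hasFDerivAt.comp_hasDerivAt ρ h1

theorem SM.hasDerivAt_dt (hf : SM f) (ρ t : ℝ) :
    HasDerivAt (f ρ)
      (fderiv ℝ (fun p : ℝ × ℝ => f p.1 p.2) (ρ, t) (0, 1)) t := by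
  have h1 : HasDerivAt (fun s : ℝ => ((ρ, s) : ℝ × ℝ)) (0, 1) t :=
    (hasDerivAt_const t ρ).prodMk (hasDerivAt_id t)
  exact ((hf.differentiable (by simp)) (ρ, t)).hasFDerivAt.comp_hasDerivAt t h1

theorem SM.dr_eq (hf : SM f) (ρ t : ℝ) :
    dr f ρ t = fderiv ℝ (fun p : ℝ × ℝ => f p.1 p.2) (ρ, t) (1, 0) :=
  (hf.hasDerivAt_dr ρ t).deriv

theorem SM.dt_eq (hf : SM f) (ρ t : ℝ) :
    dt f ρ t = fderiv ℝ (fun p : ℝ × ℝ => f p.1 p.2) (ρ, t) (0, 1) :=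
  (hf.hasDerivAt_dt ρ t).deriv

theorem SM.hdr (hf : SM f) (ρ t : ℝ) : HasDerivAt (fun q => f q t) (dr f ρ t) ρ := by
  rw [hf.dr_eq]; exact hf.hasDerivAt_dr ρ t

theorem SM.hdt (hf : SM f) (ρ t : ℝ) : HasDerivAt (f ρ) (dt f ρ t) t := by
  rw [hf.dt_eq]; exact hf.hasDerivAt_dt ρ t

theorem SM.dr' (hf : SM f) : SM (dr f) := by
  have : (fun p : ℝ × ℝ => dr f p.1 p.2)
      = fun p : ℝ × ℝ => fderiv ℝ (fun p : ℝ × ℝ => f p.1 p.2) p (1, 0) := by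
    funext p; exact hf.dr_eq p.1 p.2
  rw [SM, this]
  exact (hf.fderiv_right (le_of_eq (by simp))).clm_apply contDiff_const

theorem SM.dt' (hf : SM f) : SM (dt f) := by
  have : (fun p : ℝ × ℝ => dt f p.1 p.2)
      = fun p : ℝ × ℝ => fderiv ℝ (fun p : ℝ × ℝ => f p.1 p.2) p (0, 1) := by
    funext p; exact hf.dt_eq p.1 p.2
  rw [SM, this]
  exact (hf.fderiv_right (le_of_eq (by simp))).clm_apply contDiff_const

end WillmoreAux
namespace WillmoreAux
variable {F : Type*} [NormedAddCommGroup F] [NormedSpace ℝ F] {f g : ℝ → ℝ → F}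
variable {a b : ℝ → ℝ → ℝ}

/-- Schwarz: mixed partials commute for jointly smooth functions. -/
theorem SM.schwarz (hf : SM f) (ρ t : ℝ) : dt (dr f) ρ t = dr (dt f) ρ t := by
  set P : ℝ × ℝ → F := fun p => f p.1 p.2 with hP
  have hG : ContDiff ℝ ((⊤ : ℕ∞) : WithTop ℕ∞) (fderiv ℝ P) :=
    hf.fderiv_right (le_of_eq (by simp))
  have hGd : ∀ p : ℝ × ℝ, HasFDerivAt (fderiv ℝ P) (fderiv ℝ (fderiv ℝ P) p) p := fun p =>
    ((hG.differentiable (by simp)) p).hasFDerivAt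
  -- dt (dr f) ρ t
  have h1 : HasDerivAt (fun s => fderiv ℝ P (ρ, s) (1, 0))
      (fderiv ℝ (fderiv ℝ P) (ρ, t) (0, 1) (1, 0)) t := by
    have hline : HasDerivAt (fun s : ℝ => ((ρ, s) : ℝ × ℝ)) (0, 1) t :=
      (hasDerivAt_const t ρ).prodMk (hasDerivAt_id t)
    have := ((hGd (ρ, t)).clm_apply (hasFDerivAt_const ((1, 0) : ℝ × ℝ) _)).comp_hasDerivAt t hline
    simpa [Function.comp_def] using this
  have e1 : dt (dr f) ρ t = fderiv ℝ (fderiv ℝ P) (ρ, t) (0, 1) (1, 0) := by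
    have : (dr f ρ) = fun s => fderiv ℝ P (ρ, s) (1, 0) := by
      funext s; exact hf.dr_eq ρ s
    rw [dt, this]; exact h1.deriv
  have h2 : HasDerivAt (fun q => fderiv ℝ P (q, t) (0, 1))
      (fderiv ℝ (fderiv ℝ P) (ρ, t) (1, 0) (0, 1)) ρ := by
    have hline : HasDerivAt (fun q : ℝ => ((q, t) : ℝ × ℝ)) (1, 0) ρ :=
      (hasDerivAt_id ρ).prodMk (hasDerivAt_const ρ t)
    have := ((hGd (ρ, t)).clm_apply (hasFDerivAt_const ((0, 1) : ℝ × ℝ) _)).comp_hasDerivAt ρ hline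
    simpa [Function.comp_def] using this
  have e2 : dr (dt f) ρ t = fderiv ℝ (fderiv ℝ P) (ρ, t) (1, 0) (0, 1) := by
    have : (fun q => dt f q t) = fun q => fderiv ℝ P (q, t) (0, 1) := by
      funext q; exact hf.dt_eq q t
    rw [dr, this]; exact h2.deriv
  rw [e1, e2]
  exact (hf.contDiffAt (x := (ρ, t))).isSymmSndFDerivAt (by
      have : ((2:ℕ∞) : WithTop ℕ∞) ≤ ((⊤:ℕ∞) : WithTop ℕ∞) := WithTop.coe_le_coe.mpr le_top
      simpa using this) _ _

-- combinators
theorem SM.smul' (ha : SM a) (hg : SM g) : SM fun ρ t => a ρ t • g ρ t := ContDiff.smul ha hg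
theorem SM.neg' (hf : SM f) : SM fun ρ t => -f ρ t := hf.neg
theorem SM.sub' (hf : SM f) (hg : SM g) : SM fun ρ t => f ρ t - g ρ t := hf.sub hg
theorem SM.mul' (ha : SM a) (hb : SM b) : SM fun ρ t => a ρ t * b ρ t := ha.mul hb
theorem SM.inv' (ha : SM a) (h0 : ∀ ρ t, a ρ t ≠ 0) : SM fun ρ t => (a ρ t)⁻¹ :=
  ha.inv fun p => h0 p.1 p.2

theorem SM.inner' {f g : ℝ → ℝ → E2} (hf : SM f) (hg : SM g) :
    SM fun ρ t => (inner ℝ (f ρ t) (g ρ t) : ℝ) := ContDiff.inner ℝ hf hg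

theorem SM.norm' {f : ℝ → ℝ → E2} (hf : SM f) (h0 : ∀ ρ t, f ρ t ≠ 0) :
    SM fun ρ t => ‖f ρ t‖ := ContDiff.norm ℝ hf fun p => h0 p.1 p.2

-- pointwise product rules
theorem dr_smul (ha : SM a) (hg : SM g) (ρ t : ℝ) :
    dr (fun q s => a q s • g q s) ρ t = a ρ t • dr g ρ t + dr a ρ t • g ρ t :=
  ((ha.hdr ρ t).smul (hg.hdr ρ t)).deriv

theorem dt_smul (ha : SM a) (hg : SM g) (ρ t : ℝ) :
    dt (fun q s => a q s • g q s) ρ t = a ρ t • dt g ρ t + dt a ρ t • g ρ t :=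
  ((ha.hdt ρ t).smul (hg.hdt ρ t)).deriv

theorem dr_inner {f g : ℝ → ℝ → E2} (hf : SM f) (hg : SM g) (ρ t : ℝ) :
    dr (fun q s => (inner ℝ (f q s) (g q s) : ℝ)) ρ t
      = (inner ℝ (f ρ t) (dr g ρ t) : ℝ) + (inner ℝ (dr f ρ t) (g ρ t) : ℝ) :=
  ((hf.hdr ρ t).inner ℝ (hg.hdr ρ t)).deriv

theorem dt_inner {f g : ℝ → ℝ → E2} (hf : SM f) (hg : SM g) (ρ t : ℝ) :
    dt (fun q s => (inner ℝ (f q s) (g q s) : ℝ)) ρ t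
      = (inner ℝ (f ρ t) (dt g ρ t) : ℝ) + (inner ℝ (dt f ρ t) (g ρ t) : ℝ) :=
  ((hf.hdt ρ t).inner ℝ (hg.hdt ρ t)).deriv

theorem dr_sub (hf : SM f) (hg : SM g) (ρ t : ℝ) :
    dr (fun q s => f q s - g q s) ρ t = dr f ρ t - dr g ρ t :=
  ((hf.hdr ρ t).sub (hg.hdr ρ t)).deriv

theorem dr_neg (hf : SM f) (ρ t : ℝ) :
    dr (fun q s => -f q s) ρ t = -dr f ρ t := (hf.hdr ρ t).neg.deriv

theorem dt_neg (hf : SM f) (ρ t : ℝ) :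
    dt (fun q s => -f q s) ρ t = -dt f ρ t := (hf.hdt ρ t).neg.deriv

theorem dt_inv (ha : SM a) (h0 : ∀ ρ t, a ρ t ≠ 0) (ρ t : ℝ) :
    dt (fun q s => (a q s)⁻¹) ρ t = -dt a ρ t / a ρ t ^ 2 :=
  ((ha.hdt ρ t).inv (h0 ρ t)).deriv

theorem dr_mul (ha : SM a) (hb : SM b) (ρ t : ℝ) :
    dr (fun q s => a q s * b q s) ρ t = dr a ρ t * b ρ t + a ρ t * dr b ρ t :=
  ((ha.hdr ρ t).mul (hb.hdr ρ t)).deriv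

theorem dr_const (c : F) (ρ t : ℝ) : dr (fun _ _ => c) ρ t = 0 := deriv_const ρ c

theorem hasDerivAt_norm {f : ℝ → E2} {f' : E2} {x : ℝ} (hf : HasDerivAt f f' x)
    (h0 : f x ≠ 0) :
    HasDerivAt (fun y => ‖f y‖) ((inner ℝ (f x) f' : ℝ) / ‖f x‖) x := by
  have hi : HasDerivAt (fun y => (inner ℝ (f y) (f y) : ℝ))
      ((inner ℝ (f x) f' : ℝ) + (inner ℝ f' (f x) : ℝ)) x := hf.inner ℝ hf
  have hne : (inner ℝ (f x) (f x) : ℝ) ≠ 0 := by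
    rw [real_inner_self_eq_norm_sq]; exact pow_ne_zero 2 (norm_ne_zero_iff.2 h0)
  have := (Real.hasDerivAt_sqrt hne).comp x hi
  simp only [Function.comp_def] at this
  have heq : (fun y => Real.sqrt (inner ℝ (f y) (f y) : ℝ)) = fun y => ‖f y‖ := by
    funext y; rw [real_inner_self_eq_norm_sq, Real.sqrt_sq (norm_nonneg _)]
  rw [heq] at this
  refine this.congr_deriv ?_
  rw [real_inner_self_eq_norm_sq, Real.sqrt_sq (norm_nonneg _),
    real_inner_comm f' (f x)]
  field_simp
  ring

theorem dr_norm {f : ℝ → ℝ → E2} (hf : SM f) (h0 : ∀ ρ t, f ρ t ≠ 0) (ρ t : ℝ) :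
    dr (fun q s => ‖f q s‖) ρ t = (inner ℝ (f ρ t) (dr f ρ t) : ℝ) / ‖f ρ t‖ :=
  (hasDerivAt_norm (hf.hdr ρ t) (h0 ρ t)).deriv

theorem dt_norm {f : ℝ → ℝ → E2} (hf : SM f) (h0 : ∀ ρ t, f ρ t ≠ 0) (ρ t : ℝ) :
    dt (fun q s => ‖f q s‖) ρ t = (inner ℝ (f ρ t) (dt f ρ t) : ℝ) / ‖f ρ t‖ :=
  (hasDerivAt_norm (hf.hdt ρ t) (h0 ρ t)).deriv

end WillmoreAux
namespace WillmoreAux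

@[simp] theorem perp_apply_0 (u : E2) : perp u 0 = -(u 1) := rfl
@[simp] theorem perp_apply_1 (u : E2) : perp u 1 = u 0 := rfl

theorem inner_E2 (u v : E2) : (inner ℝ u v : ℝ) = u 0 * v 0 + u 1 * v 1 := by
  simp [PiLp.inner_apply, Fin.sum_univ_two, RCLike.inner_apply, starRingEnd_apply]; ring

theorem E2_ext {u v : E2} (h0 : u 0 = v 0) (h1 : u 1 = v 1) : u = v := by
  ext i
  fin_cases i <;> assumption

@[simp] theorem E2_add_apply (u v : E2) (i : Fin 2) : (u + v) i = u i + v i := rfl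
@[simp] theorem E2_smul_apply (c : ℝ) (u : E2) (i : Fin 2) : (c • u) i = c * u i := rfl
@[simp] theorem E2_neg_apply (u : E2) (i : Fin 2) : (-u) i = -(u i) := rfl
@[simp] theorem E2_sub_apply (u v : E2) (i : Fin 2) : (u - v) i = u i - v i := rfl

def perpL : E2 →ₗ[ℝ] E2 where
  toFun := perp
  map_add' u v := by apply E2_ext <;> simp <;> ring
  map_smul' c u := by apply E2_ext <;> simp

def perpCLM : E2 →L[ℝ] E2 := perpL.toContinuousLinearMap

theorem perpCLM_apply (u : E2) : perpCLM u = perp u := rfl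

theorem perp_smul (c : ℝ) (u : E2) : perp (c • u) = c • perp u := perpL.map_smul c u
theorem perp_neg (u : E2) : perp (-u) = -perp u := by
  apply E2_ext <;> simp
theorem perp_perp (u : E2) : perp (perp u) = -u := by
  apply E2_ext <;> simp
theorem inner_perp_self (u : E2) : (inner ℝ u (perp u) : ℝ) = 0 := by
  simp [inner_E2]; ring

theorem SM.perp' {f : ℝ → ℝ → E2} (hf : SM f) : SM fun ρ t => perp (f ρ t) := by
  have : (fun p : ℝ × ℝ => perp (f p.1 p.2)) = fun p : ℝ × ℝ => perpCLM (f p.1 p.2) := rfl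
  rw [SM, this]
  exact perpCLM.contDiff.comp hf

theorem hasDerivAt_perp {f : ℝ → E2} {f' : E2} {x : ℝ} (hf : HasDerivAt f f' x) :
    HasDerivAt (fun y => perp (f y)) (perp f') x := by
  have := perpCLM.hasFDerivAt.comp_hasDerivAt x hf
  simpa [perpCLM_apply, Function.comp_def] using this

theorem dr_perp {f : ℝ → ℝ → E2} (hf : SM f) (ρ t : ℝ) :
    dr (fun q s => perp (f q s)) ρ t = perp (dr f ρ t) :=
  (hasDerivAt_perp (hf.hdr ρ t)).deriv

theorem dt_perp {f : ℝ → ℝ → E2} (hf : SM f) (ρ t : ℝ) :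
    dt (fun q s => perp (f q s)) ρ t = perp (dt f ρ t) :=
  (hasDerivAt_perp (hf.hdt ρ t)).deriv

/-- Orthonormal decomposition along a unit vector and its perp. -/
theorem decomp (u v : E2) (hu : ‖u‖ = 1) :
    v = (inner ℝ u v : ℝ) • u + (inner ℝ (perp u) v : ℝ) • perp u := by
  have h : u 0 * u 0 + u 1 * u 1 = 1 := by
    have := real_inner_self_eq_norm_sq u
    rw [hu] at this
    rw [inner_E2] at this
    linarith [this]
  apply E2_ext <;> simp [inner_E2]
  · linear_combination (-v 0) * h
  · linear_combination (-v 1) * h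

end WillmoreAux
namespace WillmoreAux

def ww (X : ℝ → ℝ → E2) (ρ t : ℝ) : ℝ := ‖dr X ρ t‖
def wwi (X : ℝ → ℝ → E2) (ρ t : ℝ) : ℝ := ‖dr X ρ t‖⁻¹

section Geometry

variable {X : ℝ → ℝ → E2}

theorem dsT_eq (f : ℝ → ℝ → E2) (ρ t : ℝ) :
    dsT X f ρ t = wwi X ρ t • dr f ρ t := rfl

theorem dsT_eq' (f : ℝ → ℝ → ℝ) (ρ t : ℝ) :
    dsT X f ρ t = wwi X ρ t * dr f ρ t := rfl

theorem tauT_eq (ρ t : ℝ) : tauT X ρ t = wwi X ρ t • dr X ρ t := rfl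

theorem ww_pos (hreg : ∀ ρ t, dr X ρ t ≠ 0) (ρ t : ℝ) : 0 < ww X ρ t :=
  norm_pos_iff.mpr (hreg ρ t)

theorem ww_ne (hreg : ∀ ρ t, dr X ρ t ≠ 0) (ρ t : ℝ) : ww X ρ t ≠ 0 :=
  (ww_pos hreg ρ t).ne'

theorem wwi_mul_ww (hreg : ∀ ρ t, dr X ρ t ≠ 0) (ρ t : ℝ) :
    wwi X ρ t * ww X ρ t = 1 := inv_mul_cancel₀ (ww_ne hreg ρ t)

theorem ww_mul_wwi (hreg : ∀ ρ t, dr X ρ t ≠ 0) (ρ t : ℝ) :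
    ww X ρ t * wwi X ρ t = 1 := mul_inv_cancel₀ (ww_ne hreg ρ t)

theorem sm_ww (hX : SM X) (hreg : ∀ ρ t, dr X ρ t ≠ 0) : SM (ww X) :=
  SM.norm' hX.dr' hreg

theorem sm_wwi (hX : SM X) (hreg : ∀ ρ t, dr X ρ t ≠ 0) : SM (wwi X) :=
  (sm_ww hX hreg).inv' (fun ρ t => ww_ne hreg ρ t)

theorem sm_dsT {F : Type*} [NormedAddCommGroup F] [NormedSpace ℝ F]
    [InnerProductSpace ℝ F] {f : ℝ → ℝ → F}
    (hX : SM X) (hreg : ∀ ρ t, dr X ρ t ≠ 0) (hf : SM f) : SM (dsT X f) := by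
  have : dsT X f = fun ρ t => wwi X ρ t • dr f ρ t := rfl
  rw [this]
  exact (sm_wwi hX hreg).smul' hf.dr'

theorem sm_tau (hX : SM X) (hreg : ∀ ρ t, dr X ρ t ≠ 0) : SM (tauT X) := by
  have : tauT X = dsT X X := rfl
  rw [this]; exact sm_dsT hX hreg hX

theorem sm_nor (hX : SM X) (hreg : ∀ ρ t, dr X ρ t ≠ 0) : SM (norT X) := by
  have : norT X = fun ρ t => -perp (tauT X ρ t) := rfl
  rw [this]; exact ((sm_tau hX hreg).perp').neg'

theorem sm_curv (hX : SM X) (hreg : ∀ ρ t, dr X ρ t ≠ 0) : SM (curvT X) := by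
  have : curvT X = fun ρ t => -(inner ℝ (norT X ρ t) (dsT X (dsT X X) ρ t) : ℝ) := rfl
  rw [this]
  exact ((sm_nor hX hreg).inner' (sm_dsT hX hreg (sm_dsT hX hreg hX))).neg'

theorem tau_norm (hreg : ∀ ρ t, dr X ρ t ≠ 0) (ρ t : ℝ) : ‖tauT X ρ t‖ = 1 := by
  rw [tauT_eq, norm_smul, wwi, Real.norm_eq_abs, abs_of_pos (inv_pos.mpr (norm_pos_iff.mpr (hreg ρ t)))]
  exact inv_mul_cancel₀ (ww_ne hreg ρ t)

theorem inner_tau_tau (hreg : ∀ ρ t, dr X ρ t ≠ 0) (ρ t : ℝ) :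
    (inner ℝ (tauT X ρ t) (tauT X ρ t) : ℝ) = 1 := by
  rw [real_inner_self_eq_norm_sq, tau_norm hreg]; norm_num

theorem inner_perp_perp (u v : E2) :
    (inner ℝ (perp u) (perp v) : ℝ) = (inner ℝ u v : ℝ) := by
  simp [inner_E2]; ring

theorem inner_tau_nor (ρ t : ℝ) :
    (inner ℝ (tauT X ρ t) (norT X ρ t) : ℝ) = 0 := by
  rw [norT, inner_neg_right, inner_perp_self, neg_zero]

theorem inner_nor_tau (ρ t : ℝ) :
    (inner ℝ (norT X ρ t) (tauT X ρ t) : ℝ) = 0 := by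
  rw [real_inner_comm]; exact inner_tau_nor ρ t

theorem inner_nor_nor (hreg : ∀ ρ t, dr X ρ t ≠ 0) (ρ t : ℝ) :
    (inner ℝ (norT X ρ t) (norT X ρ t) : ℝ) = 1 := by
  rw [norT, inner_neg_neg, inner_perp_perp]
  exact inner_tau_tau hreg ρ t

theorem perp_nor (ρ t : ℝ) : perp (norT X ρ t) = tauT X ρ t := by
  rw [norT, perp_neg, perp_perp, neg_neg]

/-- Decomposition in the orthonormal frame `{τ, n}`. -/
theorem decomp_tn (hreg : ∀ ρ t, dr X ρ t ≠ 0) (ρ t : ℝ) (v : E2) :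
    v = (inner ℝ (tauT X ρ t) v : ℝ) • tauT X ρ t
        + (inner ℝ (norT X ρ t) v : ℝ) • norT X ρ t := by
  have h := decomp (tauT X ρ t) v (tau_norm hreg ρ t)
  rw [norT, inner_neg_left, neg_smul, smul_neg, neg_neg]
  exact h

theorem curv_eq (hreg : ∀ ρ t, dr X ρ t ≠ 0) (ρ t : ℝ) :
    curvT X ρ t = -(wwi X ρ t * (inner ℝ (norT X ρ t) (dr (tauT X) ρ t) : ℝ)) := by
  have h1 : dsT X (dsT X X) ρ t = wwi X ρ t • dr (tauT X) ρ t := rfl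
  rw [curvT, h1, real_inner_smul_right]

theorem inner_nor_drtau (hreg : ∀ ρ t, dr X ρ t ≠ 0) (ρ t : ℝ) :
    (inner ℝ (norT X ρ t) (dr (tauT X) ρ t) : ℝ) = -(ww X ρ t * curvT X ρ t) := by
  rw [curv_eq hreg ρ t, mul_neg, neg_neg, ← mul_assoc, ww_mul_wwi hreg, one_mul]

theorem inner_tau_drtau (hX : SM X) (hreg : ∀ ρ t, dr X ρ t ≠ 0) (ρ t : ℝ) :
    (inner ℝ (tauT X ρ t) (dr (tauT X) ρ t) : ℝ) = 0 := by
  have hconst : (fun q s => (inner ℝ (tauT X q s) (tauT X q s) : ℝ)) = fun _ _ => (1 : ℝ) := by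
    funext q s; exact inner_tau_tau hreg q s
  have h0 : dr (fun q s => (inner ℝ (tauT X q s) (tauT X q s) : ℝ)) ρ t = 0 := by
    rw [hconst]; exact dr_const 1 ρ t
  rw [dr_inner (sm_tau hX hreg) (sm_tau hX hreg)] at h0
  rw [real_inner_comm (tauT X ρ t) (dr (tauT X) ρ t)] at h0
  linarith

/-- Frenet: `∂_ρ τ = -(w κ) n`. -/
theorem frenet_drtau (hX : SM X) (hreg : ∀ ρ t, dr X ρ t ≠ 0) (ρ t : ℝ) :
    dr (tauT X) ρ t = (-(ww X ρ t * curvT X ρ t)) • norT X ρ t := by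
  have h := decomp_tn hreg ρ t (dr (tauT X) ρ t)
  rw [inner_tau_drtau hX hreg, inner_nor_drtau hreg] at h
  simpa using h

/-- `∂_ρ n = (w κ) τ`. -/
theorem frenet_drnor (hX : SM X) (hreg : ∀ ρ t, dr X ρ t ≠ 0) (ρ t : ℝ) :
    dr (norT X) ρ t = (ww X ρ t * curvT X ρ t) • tauT X ρ t := by
  have hn : norT X = fun q s => -perp (tauT X q s) := rfl
  rw [hn, dr_neg ((sm_tau hX hreg).perp'), dr_perp (sm_tau hX hreg),
    frenet_drtau hX hreg, perp_smul, perp_nor]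
  rw [neg_smul, neg_neg]

end Geometry
end WillmoreAux
namespace WillmoreAux
section Time

variable {X : ℝ → ℝ → E2}

/-- tangential speed `λ = ⟨τ, ∂ₛ(∂ₜX)⟩`. -/
def lam (X : ℝ → ℝ → E2) (ρ t : ℝ) : ℝ := (inner ℝ (tauT X ρ t) (dsT X (dt X) ρ t) : ℝ)
/-- normal speed `μ = ⟨n, ∂ₛ(∂ₜX)⟩`. -/
def mu (X : ℝ → ℝ → E2) (ρ t : ℝ) : ℝ := (inner ℝ (norT X ρ t) (dsT X (dt X) ρ t) : ℝ)

theorem sm_mu (hX : SM X) (hreg : ∀ ρ t, dr X ρ t ≠ 0) : SM (mu X) := by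
  have : mu X = fun ρ t => (inner ℝ (norT X ρ t) (dsT X (dt X) ρ t) : ℝ) := rfl
  rw [this]
  exact (sm_nor hX hreg).inner' (sm_dsT hX hreg hX.dt')

theorem dr_eq_ww_smul {F : Type*} [NormedAddCommGroup F] [NormedSpace ℝ F]
    [InnerProductSpace ℝ F]
    (hreg : ∀ ρ t, dr X ρ t ≠ 0) (f : ℝ → ℝ → F) (ρ t : ℝ) :
    dr f ρ t = ww X ρ t • dsT X f ρ t := by
  have : dsT X f ρ t = wwi X ρ t • dr f ρ t := rfl
  rw [this, smul_smul, ww_mul_wwi hreg, one_smul]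

theorem Xr_eq (hreg : ∀ ρ t, dr X ρ t ≠ 0) (ρ t : ℝ) :
    dr X ρ t = ww X ρ t • tauT X ρ t := by
  have : tauT X = dsT X X := rfl
  rw [this]; exact dr_eq_ww_smul hreg X ρ t

theorem dt_drX (hX : SM X) (ρ t : ℝ) : dt (dr X) ρ t = dr (dt X) ρ t := hX.schwarz ρ t

theorem dt_ww (hX : SM X) (hreg : ∀ ρ t, dr X ρ t ≠ 0) (ρ t : ℝ) :
    dt (ww X) ρ t = ww X ρ t * lam X ρ t := by
  have h : dt (ww X) ρ t
      = (inner ℝ (dr X ρ t) (dt (dr X) ρ t) : ℝ) / ‖dr X ρ t‖ := by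
    have : ww X = fun q s => ‖dr X q s‖ := rfl
    rw [this]; exact dt_norm hX.dr' hreg ρ t
  have key : (inner ℝ (dr X ρ t) (dr (dt X) ρ t) : ℝ)
      = ww X ρ t * (ww X ρ t * lam X ρ t) := by
    rw [Xr_eq hreg, dr_eq_ww_smul hreg (dt X), real_inner_smul_left,
      real_inner_smul_right, lam]
  rw [h, dt_drX hX, key, show ‖dr X ρ t‖ = ww X ρ t from rfl]
  field_simp [ww_ne hreg ρ t]

theorem dt_wwi (hX : SM X) (hreg : ∀ ρ t, dr X ρ t ≠ 0) (ρ t : ℝ) :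
    dt (wwi X) ρ t = -(lam X ρ t * wwi X ρ t) := by
  have h : dt (wwi X) ρ t = -dt (ww X) ρ t / ww X ρ t ^ 2 := by
    have : wwi X = fun q s => (ww X q s)⁻¹ := rfl
    rw [this]
    exact dt_inv (sm_ww hX hreg) (fun q s => ww_ne hreg q s) ρ t
  rw [h, dt_ww hX hreg]
  have hne' : ww X ρ t ≠ 0 := ww_ne hreg ρ t
  rw [wwi, show ww X ρ t = ‖dr X ρ t‖ from rfl] at *
  field_simp

theorem dsdt_decomp (hreg : ∀ ρ t, dr X ρ t ≠ 0) (ρ t : ℝ) :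
    dsT X (dt X) ρ t = lam X ρ t • tauT X ρ t + mu X ρ t • norT X ρ t :=
  decomp_tn hreg ρ t (dsT X (dt X) ρ t)

theorem dt_tau (hX : SM X) (hreg : ∀ ρ t, dr X ρ t ≠ 0) (ρ t : ℝ) :
    dt (tauT X) ρ t = mu X ρ t • norT X ρ t := by
  have htau : tauT X = fun q s => wwi X q s • dr X q s := rfl
  rw [htau, dt_smul (sm_wwi hX hreg) hX.dr', dt_wwi hX hreg, dt_drX hX,
    dr_eq_ww_smul hreg (dt X), Xr_eq hreg, dsdt_decomp hreg]
  have h1 : wwi X ρ t • ww X ρ t • (lam X ρ t • tauT X ρ t + mu X ρ t • norT X ρ t)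
      = (wwi X ρ t * ww X ρ t) • (lam X ρ t • tauT X ρ t + mu X ρ t • norT X ρ t) := by
    rw [smul_smul]
  rw [h1, wwi_mul_ww hreg, one_smul]
  have h2 : (-(lam X ρ t * wwi X ρ t)) • ww X ρ t • tauT X ρ t
      = (-(lam X ρ t * (wwi X ρ t * ww X ρ t))) • tauT X ρ t := by
    rw [smul_smul]; ring_nf
  rw [h2, wwi_mul_ww hreg]
  module

theorem dt_nor (hX : SM X) (hreg : ∀ ρ t, dr X ρ t ≠ 0) (ρ t : ℝ) :
    dt (norT X) ρ t = -(mu X ρ t) • tauT X ρ t := by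
  have hn : norT X = fun q s => -perp (tauT X q s) := rfl
  rw [hn, dt_neg ((sm_tau hX hreg).perp'), dt_perp (sm_tau hX hreg),
    dt_tau hX hreg, perp_smul, perp_nor]
  module

theorem dt_curv (hX : SM X) (hreg : ∀ ρ t, dr X ρ t ≠ 0) (ρ t : ℝ) :
    dt (curvT X) ρ t = -(dsT X (mu X) ρ t) - lam X ρ t * curvT X ρ t := by
  -- κ = -⟨n, g⟩ with g = wwi • dr τ
  set g : ℝ → ℝ → E2 := fun q s => wwi X q s • dr (tauT X) q s with hg
  have sm_g : SM g := (sm_wwi hX hreg).smul' (sm_tau hX hreg).dr'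
  have hκ : curvT X = fun q s => -(inner ℝ (norT X q s) (g q s) : ℝ) := rfl
  -- time derivative of g
  have hdtg : dt g ρ t
      = (-(lam X ρ t * wwi X ρ t)) • dr (tauT X) ρ t
        + wwi X ρ t • (dr (mu X) ρ t • norT X ρ t
            + mu X ρ t • ((ww X ρ t * curvT X ρ t) • tauT X ρ t)) := by
    rw [hg, dt_smul (sm_wwi hX hreg) (sm_tau hX hreg).dr', dt_wwi hX hreg]
    have hsch : dt (dr (tauT X)) ρ t = dr (dt (tauT X)) ρ t :=
      (sm_tau hX hreg).schwarz ρ t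
    have hdt_tau_fun : dt (tauT X) = fun q s => mu X q s • norT X q s := by
      funext q s; exact dt_tau hX hreg q s
    rw [hsch, hdt_tau_fun, dr_smul (sm_mu hX hreg) (sm_nor hX hreg),
      frenet_drnor hX hreg]
    module
  -- assemble
  have hdtκ : dt (curvT X) ρ t
      = -((inner ℝ (norT X ρ t) (dt g ρ t) : ℝ)
          + (inner ℝ (dt (norT X) ρ t) (g ρ t) : ℝ)) := by
    rw [hκ, dt_neg ((sm_nor hX hreg).inner' sm_g), dt_inner (sm_nor hX hreg) sm_g]
  rw [hdtκ, hdtg, dt_nor hX hreg]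
  have e1 : (inner ℝ (norT X ρ t) (dr (tauT X) ρ t) : ℝ) = -(ww X ρ t * curvT X ρ t) :=
    inner_nor_drtau hreg ρ t
  have e2 : (inner ℝ (norT X ρ t) (norT X ρ t) : ℝ) = 1 := inner_nor_nor hreg ρ t
  have e3 : (inner ℝ (norT X ρ t) (tauT X ρ t) : ℝ) = 0 := inner_nor_tau ρ t
  have e4 : (inner ℝ (tauT X ρ t) (dr (tauT X) ρ t) : ℝ) = 0 := inner_tau_drtau hX hreg ρ t
  have e6 : (inner ℝ (tauT X ρ t) (g ρ t) : ℝ) = 0 := by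
    simp only [hg]
    rw [real_inner_smul_right, e4, mul_zero]
  rw [inner_add_right, real_inner_smul_right, real_inner_smul_right,
    inner_add_right, real_inner_smul_right, real_inner_smul_right,
    real_inner_smul_right, real_inner_smul_left,
    e1, e2, e3, e6]
  have e5 : dsT X (mu X) ρ t = wwi X ρ t * dr (mu X) ρ t := rfl
  rw [e5]
  have hw : wwi X ρ t * ww X ρ t = 1 := wwi_mul_ww hreg ρ t
  linear_combination (-(lam X ρ t * curvT X ρ t)) * hw

end Time
end WillmoreAux

open WillmoreAux in
/-- System (2.12): if `X` solves the Willmore flow `∂_t X = V n` with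
`V = ∂ₛ(∂ₛκ) + (1/2)κ³`, then `(X, V, κ)` satisfies the new geometric PDE:
(i) `n · ∂_t X = V`;
(ii) `V n = ∂ₛ((∂ₛκ) n − (1/2)κ² ∂ₛX)`;
(iii) `∂_t κ = −∂ₛ(n · ∂ₛ(∂_t X)) − (∂ₛX · ∂ₛ(∂_t X)) κ`. -/
theorem new_geometric_pde (X : ℝ → ℝ → E2)
    (hX : ContDiff ℝ (⊤ : ℕ∞) (fun p : ℝ × ℝ => X p.1 p.2))
    (hreg : ∀ ρ t : ℝ, deriv (fun q => X q t) ρ ≠ 0)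
    (hflow : ∀ ρ t : ℝ, dt X ρ t = willVT X ρ t • norT X ρ t) :
    (∀ ρ t : ℝ, (inner ℝ (norT X ρ t) (dt X ρ t) : ℝ) = willVT X ρ t) ∧
    (∀ ρ t : ℝ,
      willVT X ρ t • norT X ρ t
        = dsT X (fun q s =>
            dsT X (curvT X) q s • norT X q s
              - ((1/2) * curvT X q s ^ 2) • dsT X X q s) ρ t) ∧
    (∀ ρ t : ℝ,
      dt (curvT X) ρ t
        = -dsT X (fun q s => (inner ℝ (norT X q s) (dsT X (dt X) q s) : ℝ)) ρ t
          - (inner ℝ (dsT X X ρ t) (dsT X (dt X) ρ t) : ℝ) * curvT X ρ t) := by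
  have hX' : SM X := hX.of_le (by simp)
  have hreg' : ∀ ρ t, dr X ρ t ≠ 0 := hreg
  refine ⟨?_, ?_, ?_⟩
  · -- (i)
    intro ρ t
    rw [hflow ρ t, real_inner_smul_right, inner_nor_nor hreg', mul_one]
  · -- (ii)
    intro ρ t
    have hG : (fun q s => dsT X (curvT X) q s • norT X q s
        - ((1/2) * curvT X q s ^ 2) • dsT X X q s)
        = fun q s => dsT X (curvT X) q s • norT X q s
            - ((1/2) * curvT X q s ^ 2) • tauT X q s := rfl
    rw [hG]
    have smA : SM (dsT X (curvT X)) := sm_dsT hX' hreg' (sm_curv hX' hreg')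
    have smB : SM (fun q s => (1/2) * curvT X q s ^ 2) :=
      contDiff_const.mul ((sm_curv hX' hreg').pow 2)
    have hsplit : dsT X (fun q s => dsT X (curvT X) q s • norT X q s
          - ((1/2) * curvT X q s ^ 2) • tauT X q s) ρ t
        = wwi X ρ t • (dr (fun q s => dsT X (curvT X) q s • norT X q s) ρ t
            - dr (fun q s => ((1/2) * curvT X q s ^ 2) • tauT X q s) ρ t) := by
      rw [dsT_eq, dr_sub (smA.smul' (sm_nor hX' hreg')) (smB.smul' (sm_tau hX' hreg'))]
    rw [hsplit, dr_smul smA (sm_nor hX' hreg), dr_smul smB (sm_tau hX' hreg'),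
      frenet_drnor hX' hreg', frenet_drtau hX' hreg']
    -- derivative of (1/2) κ²
    have hdrB : dr (fun q s => (1/2) * curvT X q s ^ 2) ρ t
        = curvT X ρ t * dr (curvT X) ρ t := by
      have h := (((sm_curv hX' hreg').hdr ρ t).pow 2).const_mul (1/2 : ℝ)
      have := h.deriv
      rw [dr]
      simp only [Pi.pow_apply] at this
      rw [this]
      push_cast
      ring
    rw [hdrB]
    -- scalar relations
    have hA : dsT X (curvT X) ρ t = wwi X ρ t * dr (curvT X) ρ t := rfl
    have hw : wwi X ρ t * ww X ρ t = 1 := wwi_mul_ww hreg' ρ t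
    have hV : willVT X ρ t
        = wwi X ρ t * dr (dsT X (curvT X)) ρ t + (1/2) * curvT X ρ t ^ 3 := rfl
    rw [hV, hA]
    match_scalars
    · linear_combination (-(curvT X ρ t ^ 3) / 2) * hw
    · linear_combination (-(wwi X ρ t * dr (curvT X) ρ t * curvT X ρ t)) * hw
  · -- (iii)
    intro ρ t
    exact dt_curv hX' hreg' ρ t
end
end
end

section
/- Let X : ℝ × ℝ → ℝ² be a smooth map that is 1-periodic in its first argument (X(ρ+1,t) = X(ρ,t) for all ρ, t) with ∂_ρX(ρ,t) ≠ 0 for all (ρ,t); define ∂_s f := (1/‖∂_ρX‖) ∂_ρ f (at each fixed t), τ := ∂_s X, n := −τ^⊥ where (u₁,u₂)^⊥ := (−u₂,u₁), κ := −n · ∂_s(∂_s X), and V := ∂_s(∂_s κ) + (1/2)κ³. Suppose X solves the Willmore flow ∂_t X = V n. Then the Willmore energy W(t) := (1/2)∫₀¹ κ(ρ,t)² ‖∂_ρX(ρ,t)‖ dρ satisfies dW/dt(t) = −∫₀¹ V(ρ,t)² ‖∂_ρX(ρ,t)‖ dρ ≤ 0 for all t; consequently W(t) ≤ W(t') ≤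 W(0) for all t ≥ t' ≥ 0. (Theorem 2.3, energy dissipation) -/
noncomputable section

namespace WH

variable {F : Type*} [NormedAddCommGroup F] [NormedSpace ℝ F]

def unc (f : ℝ → ℝ → F) : ℝ × ℝ → F := fun p => f p.1 p.2
def d1 (f : ℝ → ℝ → F) (ρ t : ℝ) : F := deriv (fun q => f q t) ρ
def d2 (f : ℝ → ℝ → F) (ρ t : ℝ) : F := deriv (f ρ) t

theorem hasDerivAt_d1 {f : ℝ → ℝ → F} (hf : ContDiff ℝ (⊤ : ℕ∞) (unc f)) (ρ t : ℝ) :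
    HasDerivAt (fun q => f q t) (d1 f ρ t) ρ := by
  have h : DifferentiableAt ℝ (fun q => f q t) ρ := by
    have : (fun q => f q t) = (unc f) ∘ (fun q => (q, t)) := rfl
    rw [this]
    exact ((hf.differentiable (by simp)) (ρ, t)).comp ρ
      (differentiableAt_id.prodMk (differentiableAt_const t))
  exact h.hasDerivAt

theorem hasDerivAt_d2 {f : ℝ → ℝ → F} (hf : ContDiff ℝ (⊤ : ℕ∞) (unc f)) (ρ t : ℝ) :
    HasDerivAt (f ρ) (d2 f ρ t) t := by
  have h : DifferentiableAt ℝ (f ρ) t := by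
    have : (f ρ) = (unc f) ∘ (fun s => (ρ, s)) := rfl
    rw [this]
    exact ((hf.differentiable (by simp)) (ρ, t)).comp t
      ((differentiableAt_const ρ).prodMk differentiableAt_id)
  exact h.hasDerivAt

theorem d1_eq_fderiv {f : ℝ → ℝ → F} (hf : ContDiff ℝ (⊤ : ℕ∞) (unc f)) (ρ t : ℝ) :
    d1 f ρ t = fderiv ℝ (unc f) (ρ, t) (1, 0) := by
  have h1 : HasDerivAt (fun q => f q t) (fderiv ℝ (unc f) (ρ, t) (1, 0)) ρ := by
    have := (((hf.differentiable (by simp)) (ρ, t)).hasFDerivAt).comp_hasDerivAt ρ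
      ((hasDerivAt_id ρ).prodMk (hasDerivAt_const ρ t))
    exact this
  exact (hasDerivAt_d1 hf ρ t).unique h1

theorem d2_eq_fderiv {f : ℝ → ℝ → F} (hf : ContDiff ℝ (⊤ : ℕ∞) (unc f)) (ρ t : ℝ) :
    d2 f ρ t = fderiv ℝ (unc f) (ρ, t) (0, 1) := by
  have h1 : HasDerivAt (f ρ) (fderiv ℝ (unc f) (ρ, t) (0, 1)) t := by
    have := (((hf.differentiable (by simp)) (ρ, t)).hasFDerivAt).comp_hasDerivAt t
      ((hasDerivAt_const t ρ).prodMk (hasDerivAt_id t))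
    exact this
  exact (hasDerivAt_d2 hf ρ t).unique h1

theorem contDiff_unc_d1 {f : ℝ → ℝ → F} (hf : ContDiff ℝ (⊤ : ℕ∞) (unc f)) :
    ContDiff ℝ (⊤ : ℕ∞) (unc (d1 f)) := by
  have h : unc (d1 f) = fun p => fderiv ℝ (unc f) p (1, 0) := by
    funext p; exact d1_eq_fderiv hf p.1 p.2
  rw [h]
  exact (hf.fderiv_right (by simp)).clm_apply contDiff_const

theorem contDiff_unc_d2 {f : ℝ → ℝ → F} (hf : ContDiff ℝ (⊤ : ℕ∞) (unc f)) :
    ContDiff ℝ (⊤ : ℕ∞) (unc (d2 f)) := by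
  have h : unc (d2 f) = fun p => fderiv ℝ (unc f) p (0, 1) := by
    funext p; exact d2_eq_fderiv hf p.1 p.2
  rw [h]
  exact (hf.fderiv_right (by simp)).clm_apply contDiff_const

theorem clairaut {f : ℝ → ℝ → F} (hf : ContDiff ℝ (⊤ : ℕ∞) (unc f)) (ρ t : ℝ) :
    d1 (d2 f) ρ t = d2 (d1 f) ρ t := by
  have hdf : ContDiff ℝ (⊤ : ℕ∞) (fderiv ℝ (unc f)) := hf.fderiv_right (by simp)
  have hdiff : Differentiable ℝ (fderiv ℝ (unc f)) := hdf.differentiable (by simp)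
  have hsym := second_derivative_symmetric
    (f := unc f) (f' := fderiv ℝ (unc f))
    (f'' := fderiv ℝ (fderiv ℝ (unc f)) (ρ, t))
    (fun y => ((hf.differentiable (by simp)) y).hasFDerivAt)
    ((hdiff (ρ, t)).hasFDerivAt) ((1:ℝ), (0:ℝ)) ((0:ℝ), (1:ℝ))
  have e1 : d1 (d2 f) ρ t = fderiv ℝ (fderiv ℝ (unc f)) (ρ, t) (1, 0) (0, 1) := by
    rw [d1_eq_fderiv (contDiff_unc_d2 hf) ρ t]
    have h : unc (d2 f) = fun p => fderiv ℝ (unc f) p (0, 1) := by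
      funext p; exact d2_eq_fderiv hf p.1 p.2
    rw [h]
    have h2 := ((hdiff (ρ, t)).hasFDerivAt).clm_apply
      (hasFDerivAt_const ((0:ℝ),(1:ℝ)) ((ρ,t) : ℝ × ℝ))
    rw [h2.fderiv]; simp
  have e2 : d2 (d1 f) ρ t = fderiv ℝ (fderiv ℝ (unc f)) (ρ, t) (0, 1) (1, 0) := by
    rw [d2_eq_fderiv (contDiff_unc_d1 hf) ρ t]
    have h : unc (d1 f) = fun p => fderiv ℝ (unc f) p (1, 0) := by
      funext p; exact d1_eq_fderiv hf p.1 p.2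
    rw [h]
    have h2 := ((hdiff (ρ, t)).hasFDerivAt).clm_apply
      (hasFDerivAt_const ((1:ℝ),(0:ℝ)) ((ρ,t) : ℝ × ℝ))
    rw [h2.fderiv]; simp
  rw [e1, e2, hsym]

@[simp] theorem perp_apply0 (u : E2) : perp u 0 = -(u 1) := rfl
@[simp] theorem perp_apply1 (u : E2) : perp u 1 = u 0 := rfl

def perpL : E2 →ₗ[ℝ] E2 where
  toFun := perp
  map_add' := by
    intro u v
    refine (PiLp.ext fun i => ?_)
    fin_cases i <;> (simp [perp]; try ring)
  map_smul' := by
    intro c u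
    refine (PiLp.ext fun i => ?_)
    fin_cases i <;> simp [perp]

def perpCL : E2 →L[ℝ] E2 := perpL.toContinuousLinearMap

@[simp] theorem perpCL_apply (u : E2) : perpCL u = perp u := rfl

theorem perp_smul (c : ℝ) (u : E2) : perp (c • u) = c • perp u := perpL.map_smul c u
theorem perp_neg (u : E2) : perp (-u) = -perp u := perpL.map_neg u
theorem perp_add (u v : E2) : perp (u + v) = perp u + perp v := perpL.map_add u v

theorem inner_perp_self (u : E2) : (inner ℝ (perp u) u : ℝ) = 0 := by
  simp [PiLp.inner_apply, Fin.sum_univ_two]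
  ring

theorem inner_self_perp (u : E2) : (inner ℝ u (perp u) : ℝ) = 0 := by
  simp [PiLp.inner_apply, Fin.sum_univ_two]
  ring

theorem inner_perp_perp (u v : E2) : (inner ℝ (perp u) (perp v) : ℝ) = inner ℝ u v := by
  simp [PiLp.inner_apply, Fin.sum_univ_two]
  ring

theorem perp_perp (u : E2) : perp (perp u) = -u := by
  refine (PiLp.ext fun i => ?_)
  fin_cases i <;> simp [perp]

theorem decomp (u : E2) (hu : (inner ℝ u u : ℝ) = 1) (v : E2) :
    (inner ℝ v u : ℝ) • u + (inner ℝ v (perp u) : ℝ) • perp u = v := by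
  have h : u 0 * u 0 + u 1 * u 1 = 1 := by
    simp only [PiLp.inner_apply, Fin.sum_univ_two, RCLike.inner_apply, conj_trivial] at hu
    linear_combination hu
  refine (PiLp.ext fun i => ?_)
  fin_cases i
  · simp only [PiLp.inner_apply, Fin.sum_univ_two, RCLike.inner_apply, starRingEnd_apply,
      star_trivial, PiLp.smul_apply, PiLp.add_apply, smul_eq_mul, perp_apply0, perp_apply1,
      Fin.isValue, Fin.mk_zero, Fin.mk_one]
    linear_combination v 0 * h
  · simp only [PiLp.inner_apply, Fin.sum_univ_two, RCLike.inner_apply, starRingEnd_apply,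
      star_trivial, PiLp.smul_apply, PiLp.add_apply, smul_eq_mul, perp_apply0, perp_apply1,
      Fin.isValue, Fin.mk_zero, Fin.mk_one]
    linear_combination v 1 * h

theorem hasDerivAt_perp {g : ℝ → E2} {g' : E2} {x : ℝ} (h : HasDerivAt g g' x) :
    HasDerivAt (fun x => perp (g x)) (perp g') x := by
  exact perpCL.hasFDerivAt.comp_hasDerivAt x h

/-- derivative of the norm of a nonvanishing function -/
theorem hasDerivAt_norm {g : ℝ → E2} {g' : E2} {x : ℝ} (h : HasDerivAt g g' x)
    (hg : g x ≠ 0) :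
    HasDerivAt (fun y => ‖g y‖) (‖g x‖⁻¹ * (inner ℝ (g x) g' : ℝ)) x := by
  have h2 : HasDerivAt (fun y => ‖g y‖ ^ 2) (2 * (inner ℝ (g x) g' : ℝ)) x := h.norm_sq
  have hne : ‖g x‖ ^ 2 ≠ 0 := pow_ne_zero 2 (norm_ne_zero_iff.mpr hg)
  have h3 := h2.sqrt hne
  have heq : (fun y => Real.sqrt (‖g y‖ ^ 2)) = fun y => ‖g y‖ := by
    funext y; exact Real.sqrt_sq (norm_nonneg _)
  rw [heq] at h3
  have hval : 2 * (inner ℝ (g x) g' : ℝ) / (2 * Real.sqrt (‖g x‖ ^ 2)) =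
      ‖g x‖⁻¹ * (inner ℝ (g x) g' : ℝ) := by
    rw [Real.sqrt_sq (norm_nonneg _)]
    field_simp
  rwa [hval] at h3


section Geometry

variable {X : ℝ → ℝ → E2}

def rX (X : ℝ → ℝ → E2) (ρ t : ℝ) : ℝ := ‖d1 X ρ t‖

theorem dsT_eq (f : ℝ → ℝ → F) (ρ t : ℝ) :
    dsT X f ρ t = (rX X ρ t)⁻¹ • d1 f ρ t := rfl

theorem rX_pos (hreg : ∀ ρ t : ℝ, d1 X ρ t ≠ 0) (ρ t : ℝ) : 0 < rX X ρ t :=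
  norm_pos_iff.mpr (hreg ρ t)

theorem contDiff_rX (hX : ContDiff ℝ (⊤ : ℕ∞) (unc X)) (hreg : ∀ ρ t : ℝ, d1 X ρ t ≠ 0) :
    ContDiff ℝ (⊤ : ℕ∞) (unc (rX X)) :=
  (contDiff_unc_d1 hX).norm ℝ (fun p => hreg p.1 p.2)

theorem contDiff_dsT (hX : ContDiff ℝ (⊤ : ℕ∞) (unc X)) (hreg : ∀ ρ t : ℝ, d1 X ρ t ≠ 0)
    {f : ℝ → ℝ → F} (hf : ContDiff ℝ (⊤ : ℕ∞) (unc f)) :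
    ContDiff ℝ (⊤ : ℕ∞) (unc (dsT X f)) := by
  have h : unc (dsT X f) = fun p => (unc (rX X) p)⁻¹ • unc (d1 f) p := rfl
  rw [h]
  exact (((contDiff_rX hX hreg)).inv
    (fun p => (rX_pos hreg p.1 p.2).ne')).smul (contDiff_unc_d1 hf)

theorem contDiff_tau (hX : ContDiff ℝ (⊤ : ℕ∞) (unc X)) (hreg : ∀ ρ t : ℝ, d1 X ρ t ≠ 0) :
    ContDiff ℝ (⊤ : ℕ∞) (unc (tauT X)) := contDiff_dsT hX hreg hX

theorem contDiff_nor (hX : ContDiff ℝ (⊤ : ℕ∞) (unc X)) (hreg : ∀ ρ t : ℝ, d1 X ρ t ≠ 0) :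
    ContDiff ℝ (⊤ : ℕ∞) (unc (norT X)) := by
  have h : unc (norT X) = fun p => -(perpCL (unc (tauT X) p)) := rfl
  rw [h]
  exact (perpCL.contDiff.comp (contDiff_tau hX hreg)).neg

theorem contDiff_curv (hX : ContDiff ℝ (⊤ : ℕ∞) (unc X)) (hreg : ∀ ρ t : ℝ, d1 X ρ t ≠ 0) :
    ContDiff ℝ (⊤ : ℕ∞) (unc (curvT X)) := by
  have h : unc (curvT X) = fun p =>
      -(inner ℝ (unc (norT X) p) (unc (dsT X (dsT X X)) p) : ℝ) := rfl
  rw [h]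
  exact (ContDiff.inner (𝕜 := ℝ) (contDiff_nor hX hreg)
    (contDiff_dsT hX hreg (contDiff_dsT hX hreg hX))).neg

theorem contDiff_willV (hX : ContDiff ℝ (⊤ : ℕ∞) (unc X)) (hreg : ∀ ρ t : ℝ, d1 X ρ t ≠ 0) :
    ContDiff ℝ (⊤ : ℕ∞) (unc (willVT X)) := by
  have h : unc (willVT X) = fun p =>
      unc (dsT X (dsT X (curvT X))) p + (1/2) * (unc (curvT X) p) ^ 3 := rfl
  rw [h]
  exact (contDiff_dsT hX hreg (contDiff_dsT hX hreg (contDiff_curv hX hreg))).add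
    ((contDiff_const.mul ((contDiff_curv hX hreg).pow 3)))


theorem tauT_eq (ρ t : ℝ) : tauT X ρ t = (rX X ρ t)⁻¹ • d1 X ρ t := rfl

theorem tau_unit (hreg : ∀ ρ t : ℝ, d1 X ρ t ≠ 0) (ρ t : ℝ) :
    (inner ℝ (tauT X ρ t) (tauT X ρ t) : ℝ) = 1 := by
  have hr : rX X ρ t ≠ 0 := (rX_pos hreg ρ t).ne'
  rw [tauT_eq, real_inner_smul_left, real_inner_smul_right, real_inner_self_eq_norm_sq]
  have h : ‖d1 X ρ t‖ = rX X ρ t := rfl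
  rw [h]
  field_simp

theorem perp_tau (ρ t : ℝ) : perp (tauT X ρ t) = -norT X ρ t := by
  simp [norT]

theorem inner_tau_nor (ρ t : ℝ) : (inner ℝ (tauT X ρ t) (norT X ρ t) : ℝ) = 0 := by
  have h : norT X ρ t = -perp (tauT X ρ t) := rfl
  rw [h, inner_neg_right, inner_self_perp, neg_zero]

theorem inner_nor_tau (ρ t : ℝ) : (inner ℝ (norT X ρ t) (tauT X ρ t) : ℝ) = 0 := by
  rw [real_inner_comm]; exact inner_tau_nor ρ t

theorem inner_nor_nor (hreg : ∀ ρ t : ℝ, d1 X ρ t ≠ 0) (ρ t : ℝ) :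
    (inner ℝ (norT X ρ t) (norT X ρ t) : ℝ) = 1 := by
  have h : norT X ρ t = -perp (tauT X ρ t) := rfl
  rw [h, inner_neg_neg, inner_perp_perp]
  exact tau_unit hreg ρ t

theorem perp_nor (ρ t : ℝ) : perp (norT X ρ t) = tauT X ρ t := by
  have h : norT X ρ t = -perp (tauT X ρ t) := rfl
  rw [h, perp_neg, perp_perp, neg_neg]

theorem curv_eq (ρ t : ℝ) :
    curvT X ρ t = -((rX X ρ t)⁻¹ * (inner ℝ (norT X ρ t) (d1 (tauT X) ρ t) : ℝ)) := by
  have h : curvT X ρ t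
      = -(inner ℝ (norT X ρ t) ((rX X ρ t)⁻¹ • d1 (tauT X) ρ t) : ℝ) := rfl
  rw [h, real_inner_smul_right]

theorem inner_nor_d1tau (hreg : ∀ ρ t : ℝ, d1 X ρ t ≠ 0) (ρ t : ℝ) :
    (inner ℝ (norT X ρ t) (d1 (tauT X) ρ t) : ℝ) = -(curvT X ρ t * rX X ρ t) := by
  have hr : rX X ρ t ≠ 0 := (rX_pos hreg ρ t).ne'
  have h := curv_eq (X := X) ρ t
  field_simp at h ⊢
  linarith [h]

theorem inner_tau_d1tau (hX : ContDiff ℝ (⊤ : ℕ∞) (unc X)) (hreg : ∀ ρ t : ℝ, d1 X ρ t ≠ 0)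
    (ρ t : ℝ) : (inner ℝ (tauT X ρ t) (d1 (tauT X) ρ t) : ℝ) = 0 := by
  have hτ := hasDerivAt_d1 (contDiff_tau hX hreg) ρ t
  have h1 := HasDerivAt.inner ℝ hτ hτ
  have hconst : (fun q => (inner ℝ (tauT X q t) (tauT X q t) : ℝ)) = fun _ => (1:ℝ) :=
    funext fun q => tau_unit hreg q t
  have h2 : HasDerivAt (fun q => (inner ℝ (tauT X q t) (tauT X q t) : ℝ)) 0 ρ := by
    rw [hconst]; exact hasDerivAt_const ρ 1
  have h3 := h1.unique h2
  rw [real_inner_comm (tauT X ρ t)] at h3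
  linarith

theorem d1_tau (hX : ContDiff ℝ (⊤ : ℕ∞) (unc X)) (hreg : ∀ ρ t : ℝ, d1 X ρ t ≠ 0) (ρ t : ℝ) :
    d1 (tauT X) ρ t = (-(curvT X ρ t * rX X ρ t)) • norT X ρ t := by
  have hdec := decomp (tauT X ρ t) (tau_unit hreg ρ t) (d1 (tauT X) ρ t)
  have e1 : (inner ℝ (d1 (tauT X) ρ t) (tauT X ρ t) : ℝ) = 0 := by
    rw [real_inner_comm]; exact inner_tau_d1tau hX hreg ρ t
  have e2 : (inner ℝ (d1 (tauT X) ρ t) (perp (tauT X ρ t)) : ℝ)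
      = curvT X ρ t * rX X ρ t := by
    rw [perp_tau, inner_neg_right, real_inner_comm, inner_nor_d1tau hreg]; ring
  rw [e1, e2, perp_tau] at hdec
  rw [← hdec]
  simp

theorem d1_nor (hX : ContDiff ℝ (⊤ : ℕ∞) (unc X)) (hreg : ∀ ρ t : ℝ, d1 X ρ t ≠ 0) (ρ t : ℝ) :
    d1 (norT X) ρ t = (curvT X ρ t * rX X ρ t) • tauT X ρ t := by
  have hτ := hasDerivAt_d1 (contDiff_tau hX hreg) ρ t
  have h1 : HasDerivAt (fun q => norT X q t) (-(perp (d1 (tauT X) ρ t))) ρ :=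
    (hasDerivAt_perp hτ).neg
  have h2 := (hasDerivAt_d1 (contDiff_nor hX hreg) ρ t).unique h1
  rw [h2, d1_tau hX hreg, perp_smul, perp_nor]
  simp


theorem dsT_real (f : ℝ → ℝ → ℝ) (ρ t : ℝ) :
    dsT X f ρ t = (rX X ρ t)⁻¹ * d1 f ρ t := rfl

theorem d1X_eq (hreg : ∀ ρ t : ℝ, d1 X ρ t ≠ 0) (ρ t : ℝ) :
    d1 X ρ t = rX X ρ t • tauT X ρ t := by
  rw [tauT_eq, smul_smul, mul_inv_cancel₀ (rX_pos hreg ρ t).ne', one_smul]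

section Flow

variable (hX : ContDiff ℝ (⊤ : ℕ∞) (unc X)) (hreg : ∀ ρ t : ℝ, d1 X ρ t ≠ 0)
  (hflow : ∀ ρ t : ℝ, dt X ρ t = willVT X ρ t • norT X ρ t)

include hX hreg hflow

theorem d2_d1X (ρ t : ℝ) :
    d2 (d1 X) ρ t = willVT X ρ t • d1 (norT X) ρ t
      + d1 (willVT X) ρ t • norT X ρ t := by
  rw [← clairaut hX]
  have hfun : (fun q => d2 X q t) = (fun q => willVT X q t • norT X q t) :=
    funext fun q => hflow q t
  have h1 : HasDerivAt (fun q => willVT X q t • norT X q t)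
      (willVT X ρ t • d1 (norT X) ρ t + d1 (willVT X) ρ t • norT X ρ t) ρ :=
    HasDerivAt.smul (hasDerivAt_d1 (contDiff_willV hX hreg) ρ t)
      (hasDerivAt_d1 (contDiff_nor hX hreg) ρ t)
  have h2 : d1 (d2 X) ρ t = deriv (fun q => willVT X q t • norT X q t) ρ := by
    have : d1 (d2 X) ρ t = deriv (fun q => d2 X q t) ρ := rfl
    rw [this, hfun]
  rw [h2, h1.deriv]

theorem d2_rX (ρ t : ℝ) :
    d2 (rX X) ρ t = curvT X ρ t * willVT X ρ t * rX X ρ t := by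
  have hu := hasDerivAt_d2 (contDiff_unc_d1 hX) ρ t
  have h1 := hasDerivAt_norm hu (hreg ρ t)
  have h2 := (hasDerivAt_d2 (contDiff_rX hX hreg) ρ t).unique h1
  rw [h2]
  have h3 : ‖d1 X ρ t‖ = rX X ρ t := rfl
  rw [h3, d2_d1X hX hreg hflow, d1X_eq hreg, d1_nor hX hreg]
  simp only [inner_add_right, real_inner_smul_left, real_inner_smul_right,
    inner_tau_nor, inner_nor_tau, tau_unit hreg]
  have hr : rX X ρ t ≠ 0 := (rX_pos hreg ρ t).ne'
  field_simp
  ring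

theorem d2_tau (ρ t : ℝ) :
    d2 (tauT X) ρ t = dsT X (willVT X) ρ t • norT X ρ t := by
  have hr : rX X ρ t ≠ 0 := (rX_pos hreg ρ t).ne'
  have hrd := hasDerivAt_d2 (contDiff_rX hX hreg) ρ t
  have hu := hasDerivAt_d2 (contDiff_unc_d1 hX) ρ t
  have h1 : HasDerivAt (fun s => (rX X ρ s)⁻¹ • d1 X ρ s)
      ((rX X ρ t)⁻¹ • d2 (d1 X) ρ t + (-(d2 (rX X) ρ t) / rX X ρ t ^ 2) • d1 X ρ t) t :=
    HasDerivAt.smul (hrd.inv hr) hu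
  have h2 := (hasDerivAt_d2 (contDiff_tau hX hreg) ρ t).unique h1
  rw [h2, d2_d1X hX hreg hflow, d2_rX hX hreg hflow, d1_nor hX hreg, d1X_eq hreg,
    dsT_real]
  match_scalars <;> (field_simp; try ring)

theorem d2_nor (ρ t : ℝ) :
    d2 (norT X) ρ t = (-(dsT X (willVT X) ρ t)) • tauT X ρ t := by
  have hτ := hasDerivAt_d2 (contDiff_tau hX hreg) ρ t
  have h1 : HasDerivAt (fun s => norT X ρ s) (-(perp (d2 (tauT X) ρ t))) t :=
    (hasDerivAt_perp hτ).neg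
  have h2 := (hasDerivAt_d2 (contDiff_nor hX hreg) ρ t).unique h1
  rw [h2, d2_tau hX hreg hflow, perp_smul, perp_nor]
  simp

theorem d2_d1tau (ρ t : ℝ) :
    d2 (d1 (tauT X)) ρ t = d1 (dsT X (willVT X)) ρ t • norT X ρ t
      + (dsT X (willVT X) ρ t * (curvT X ρ t * rX X ρ t)) • tauT X ρ t := by
  rw [← clairaut (contDiff_tau hX hreg)]
  have hfun : (fun q => d2 (tauT X) q t)
      = (fun q => dsT X (willVT X) q t • norT X q t) :=
    funext fun q => d2_tau hX hreg hflow q t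
  have hsV : ContDiff ℝ (⊤ : ℕ∞) (unc (dsT X (willVT X))) :=
    contDiff_dsT hX hreg (contDiff_willV hX hreg)
  have h1 : HasDerivAt (fun q => dsT X (willVT X) q t • norT X q t)
      (dsT X (willVT X) ρ t • d1 (norT X) ρ t
        + d1 (dsT X (willVT X)) ρ t • norT X ρ t) ρ :=
    HasDerivAt.smul (hasDerivAt_d1 hsV ρ t) (hasDerivAt_d1 (contDiff_nor hX hreg) ρ t)
  have h2 : d1 (d2 (tauT X)) ρ t
      = deriv (fun q => dsT X (willVT X) q t • norT X q t) ρ := by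
    have h3 : d1 (d2 (tauT X)) ρ t = deriv (fun q => d2 (tauT X) q t) ρ := rfl
    rw [h3, hfun]
  rw [h2, h1.deriv, d1_nor hX hreg]
  rw [smul_smul]
  abel

theorem d2_curv (ρ t : ℝ) :
    d2 (curvT X) ρ t = -(curvT X ρ t ^ 2 * willVT X ρ t)
      - dsT X (dsT X (willVT X)) ρ t := by
  have hr : rX X ρ t ≠ 0 := (rX_pos hreg ρ t).ne'
  have hrd := hasDerivAt_d2 (contDiff_rX hX hreg) ρ t
  have hn := hasDerivAt_d2 (contDiff_nor hX hreg) ρ t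
  have hdτ := hasDerivAt_d2 (contDiff_unc_d1 (contDiff_tau hX hreg)) ρ t
  have h1 : HasDerivAt
      (fun s => -((rX X ρ s)⁻¹ * (inner ℝ (norT X ρ s) (d1 (tauT X) ρ s) : ℝ)))
      (-(-(d2 (rX X) ρ t) / rX X ρ t ^ 2
          * (inner ℝ (norT X ρ t) (d1 (tauT X) ρ t) : ℝ)
        + (rX X ρ t)⁻¹ * ((inner ℝ (norT X ρ t) (d2 (d1 (tauT X)) ρ t) : ℝ)
          + (inner ℝ (d2 (norT X) ρ t) (d1 (tauT X) ρ t) : ℝ)))) t :=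
    ((hrd.inv hr).mul (HasDerivAt.inner ℝ hn hdτ)).neg
  have hfun : (fun s => curvT X ρ s)
      = (fun s => -((rX X ρ s)⁻¹ * (inner ℝ (norT X ρ s) (d1 (tauT X) ρ s) : ℝ))) :=
    funext fun s => curv_eq ρ s
  have h2 : HasDerivAt (fun s => curvT X ρ s)
      (-(-(d2 (rX X) ρ t) / rX X ρ t ^ 2
          * (inner ℝ (norT X ρ t) (d1 (tauT X) ρ t) : ℝ)
        + (rX X ρ t)⁻¹ * ((inner ℝ (norT X ρ t) (d2 (d1 (tauT X)) ρ t) : ℝ)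
          + (inner ℝ (d2 (norT X) ρ t) (d1 (tauT X) ρ t) : ℝ)))) t := by
    rw [hfun]; exact h1
  have h3 := (hasDerivAt_d2 (contDiff_curv hX hreg) ρ t).unique h2
  rw [h3, d2_d1tau hX hreg hflow, d2_nor hX hreg hflow, d1_tau hX hreg,
    d2_rX hX hreg hflow]
  simp only [inner_add_right, real_inner_smul_left, real_inner_smul_right,
    inner_nor_nor hreg, inner_nor_tau, inner_tau_nor, tau_unit hreg]
  rw [dsT_real (dsT X (willVT X))]
  field_simp
  ring

end Flow


def gT (X : ℝ → ℝ → E2) (ρ t : ℝ) : ℝ := curvT X ρ t ^ 2 * rX X ρ t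

def GT (X : ℝ → ℝ → E2) (ρ t : ℝ) : ℝ :=
  willVT X ρ t * dsT X (curvT X) ρ t - curvT X ρ t * dsT X (willVT X) ρ t

section Flow2

variable (hX : ContDiff ℝ (⊤ : ℕ∞) (unc X)) (hreg : ∀ ρ t : ℝ, d1 X ρ t ≠ 0)
  (hflow : ∀ ρ t : ℝ, dt X ρ t = willVT X ρ t • norT X ρ t)

include hX hreg

theorem contDiff_g : ContDiff ℝ (⊤ : ℕ∞) (unc (gT X)) :=
  ((contDiff_curv hX hreg).pow 2).mul (contDiff_rX hX hreg)

theorem contDiff_G : ContDiff ℝ (⊤ : ℕ∞) (unc (GT X)) :=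
  ((contDiff_willV hX hreg).mul
      (contDiff_dsT hX hreg (contDiff_curv hX hreg))).sub
    ((contDiff_curv hX hreg).mul
      (contDiff_dsT hX hreg (contDiff_willV hX hreg)))

include hflow

theorem d2_g (ρ t : ℝ) :
    d2 (gT X) ρ t = 2 * curvT X ρ t * d2 (curvT X) ρ t * rX X ρ t
      + curvT X ρ t ^ 2 * d2 (rX X) ρ t := by
  have hc := hasDerivAt_d2 (contDiff_curv hX hreg) ρ t
  have hr := hasDerivAt_d2 (contDiff_rX hX hreg) ρ t
  have h1 := (hc.pow 2).mul hr
  have h2 := (hasDerivAt_d2 (contDiff_g hX hreg) ρ t).unique h1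
  rw [h2]
  simp only [Pi.pow_apply]
  ring

theorem d1_G (ρ t : ℝ) :
    d1 (GT X) ρ t = d1 (willVT X) ρ t * dsT X (curvT X) ρ t
      + willVT X ρ t * d1 (dsT X (curvT X)) ρ t
      - (d1 (curvT X) ρ t * dsT X (willVT X) ρ t
        + curvT X ρ t * d1 (dsT X (willVT X)) ρ t) := by
  have hV := hasDerivAt_d1 (contDiff_willV hX hreg) ρ t
  have hsk := hasDerivAt_d1 (contDiff_dsT hX hreg (contDiff_curv hX hreg)) ρ t
  have hk := hasDerivAt_d1 (contDiff_curv hX hreg) ρ t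
  have hsV := hasDerivAt_d1 (contDiff_dsT hX hreg (contDiff_willV hX hreg)) ρ t
  have h1 := (hV.mul hsk).sub (hk.mul hsV)
  have h2 := (hasDerivAt_d1 (contDiff_G hX hreg) ρ t).unique h1
  rw [h2]
  try ring

theorem key_identity (ρ t : ℝ) :
    (1/2) * d2 (gT X) ρ t
      = -(willVT X ρ t ^ 2 * rX X ρ t) + d1 (GT X) ρ t := by
  have hr : rX X ρ t ≠ 0 := (rX_pos hreg ρ t).ne'
  have hV : willVT X ρ t = (rX X ρ t)⁻¹ * d1 (dsT X (curvT X)) ρ t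
      + (1/2) * curvT X ρ t ^ 3 := by
    rw [show willVT X ρ t
      = dsT X (dsT X (curvT X)) ρ t + (1/2) * curvT X ρ t ^ 3 from rfl, dsT_real]
  rw [d2_g hX hreg hflow, d1_G hX hreg hflow, d2_curv hX hreg hflow,
    d2_rX hX hreg hflow, dsT_real, dsT_real, dsT_real]
  rw [hV]
  field_simp
  ring

end Flow2

section Periodic

variable {f : ℝ → ℝ → F}

theorem per_d1 (h : ∀ ρ t : ℝ, f (ρ + 1) t = f ρ t) (ρ t : ℝ) :
    d1 f (ρ + 1) t = d1 f ρ t := by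
  have hfe : (fun q => f (q + 1) t) = (fun q => f q t) := funext fun q => h q t
  show deriv (fun q => f q t) (ρ + 1) = deriv (fun q => f q t) ρ
  rw [← deriv_comp_add_const (fun q => f q t) 1 ρ]
  exact congrFun (congrArg deriv hfe) ρ

end Periodic

section Per2

variable (hper : ∀ ρ t : ℝ, X (ρ + 1) t = X ρ t)
include hper

theorem per_rX (ρ t : ℝ) : rX X (ρ + 1) t = rX X ρ t := by
  unfold rX; rw [per_d1 hper]

theorem per_dsT {f : ℝ → ℝ → F} (h : ∀ ρ t : ℝ, f (ρ + 1) t = f ρ t) (ρ t : ℝ) :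
    dsT X f (ρ + 1) t = dsT X f ρ t := by
  rw [dsT_eq, dsT_eq, per_rX hper, per_d1 h]

theorem per_tau (ρ t : ℝ) : tauT X (ρ + 1) t = tauT X ρ t := per_dsT hper hper ρ t

theorem per_nor (ρ t : ℝ) : norT X (ρ + 1) t = norT X ρ t := by
  unfold norT; rw [per_tau hper]

theorem per_curv (ρ t : ℝ) : curvT X (ρ + 1) t = curvT X ρ t := by
  unfold curvT
  rw [per_nor hper, per_dsT hper (per_dsT hper hper)]

theorem per_willV (ρ t : ℝ) : willVT X (ρ + 1) t = willVT X ρ t := by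
  unfold willVT
  rw [per_curv hper, per_dsT hper (per_dsT hper (per_curv hper))]

theorem per_G (ρ t : ℝ) : GT X (ρ + 1) t = GT X ρ t := by
  unfold GT
  rw [per_willV hper, per_curv hper, per_dsT hper (per_curv hper),
    per_dsT hper (per_willV hper)]

end Per2

theorem cont_slice1 {f : ℝ → ℝ → F} (hf : ContDiff ℝ (⊤ : ℕ∞) (unc f)) (t : ℝ) :
    Continuous fun ρ => f ρ t :=
  hf.continuous.comp (continuous_id.prodMk continuous_const)

theorem integral_d1G_zero (hX : ContDiff ℝ (⊤ : ℕ∞) (unc X))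
    (hreg : ∀ ρ t : ℝ, d1 X ρ t ≠ 0) (hper : ∀ ρ t : ℝ, X (ρ + 1) t = X ρ t)
    (t : ℝ) : (∫ ρ in (0:ℝ)..1, d1 (GT X) ρ t) = 0 := by
  have hderiv : ∀ x ∈ Set.uIcc (0:ℝ) 1, HasDerivAt (fun q => GT X q t)
      (d1 (GT X) x t) x := fun x _ => hasDerivAt_d1 (contDiff_G hX hreg) x t
  have hint : IntervalIntegrable (fun q => d1 (GT X) q t) MeasureTheory.volume 0 1 :=
    (cont_slice1 (contDiff_unc_d1 (contDiff_G hX hreg)) t).intervalIntegrable 0 1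
  rw [intervalIntegral.integral_eq_sub_of_hasDerivAt hderiv hint]
  have h := per_G (X := X) hper 0 t
  rw [zero_add] at h
  rw [h, sub_self]


theorem hasDerivAt_intg (hX : ContDiff ℝ (⊤ : ℕ∞) (unc X))
    (hreg : ∀ ρ t : ℝ, d1 X ρ t ≠ 0) (t₀ : ℝ) :
    HasDerivAt (fun s => ∫ ρ in (0:ℝ)..1, gT X ρ s)
      (∫ ρ in (0:ℝ)..1, d2 (gT X) ρ t₀) t₀ := by
  have hg := contDiff_g hX hreg
  have hg2 := contDiff_unc_d2 hg
  obtain ⟨C, hC⟩ := IsCompact.exists_bound_of_continuousOn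
    ((isCompact_Icc (a := (0:ℝ)) (b := 1)).prod
      (isCompact_Icc (a := t₀ - 1) (b := t₀ + 1)))
    hg2.continuous.continuousOn
  refine (intervalIntegral.hasDerivAt_integral_of_dominated_loc_of_deriv_le
    (F := fun s ρ => gT X ρ s) (F' := fun s ρ => d2 (gT X) ρ s)
    (bound := fun _ => C) (Metric.ball_mem_nhds t₀ one_pos) ?_ ?_ ?_ ?_ ?_ ?_).2
  · exact Filter.Eventually.of_forall fun x =>
      (cont_slice1 hg x).aestronglyMeasurable
  · exact (cont_slice1 hg t₀).intervalIntegrable 0 1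
  · exact (cont_slice1 hg2 t₀).aestronglyMeasurable
  · refine Filter.Eventually.of_forall fun ρ hρ x hx => ?_
    have hx' : x ∈ Set.Icc (t₀ - 1) (t₀ + 1) := by
      have h1 := mem_ball_iff_norm.mp hx
      rw [Real.norm_eq_abs, abs_lt] at h1
      constructor <;> linarith [h1.1, h1.2]
    have hρ' : ρ ∈ Set.Icc (0:ℝ) 1 := by
      have he : Set.uIoc (0:ℝ) 1 = Set.Ioc 0 1 := Set.uIoc_of_le zero_le_one
      rw [he] at hρ
      exact Set.Ioc_subset_Icc_self hρ
    exact hC (ρ, x) ⟨hρ', hx'⟩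
  · exact intervalIntegrable_const
  · exact Filter.Eventually.of_forall fun ρ _ x _ => hasDerivAt_d2 hg ρ x

end Geometry

end WH

/-- Theorem 2.3 (energy dissipation): for a `1`-periodic solution of the Willmore
flow `∂_t X = V n`, the Willmore energy `W(t) = (1/2)∫₀¹ κ² ‖∂_ρX‖ dρ` satisfies
`dW/dt = −∫₀¹ V² ‖∂_ρX‖ dρ ≤ 0`; consequently `W(t) ≤ W(t') ≤ W(0)` for all
`t ≥ t' ≥ 0`. -/
theorem willmore_energy_dissipation (X : ℝ → ℝ → E2)
    (hX : ContDiff ℝ (⊤ : ℕ∞) (fun p : ℝ × ℝ => X p.1 p.2))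
    (hper : ∀ ρ t : ℝ, X (ρ + 1) t = X ρ t)
    (hreg : ∀ ρ t : ℝ, deriv (fun q => X q t) ρ ≠ 0)
    (hflow : ∀ ρ t : ℝ, dt X ρ t = willVT X ρ t • norT X ρ t)
    (W : ℝ → ℝ)
    (hW : W = fun s => (1/2) * ∫ ρ in (0:ℝ)..1, curvT X ρ s ^ 2 * ‖deriv (fun q => X q s) ρ‖) :
    (∀ t : ℝ,
      HasDerivAt W
        (-∫ ρ in (0:ℝ)..1, willVT X ρ t ^ 2 * ‖deriv (fun q => X q t) ρ‖) t) ∧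
    (∀ t : ℝ,
      (-∫ ρ in (0:ℝ)..1, willVT X ρ t ^ 2 * ‖deriv (fun q => X q t) ρ‖) ≤ 0) ∧
    (∀ t t' : ℝ, 0 ≤ t' → t' ≤ t → W t ≤ W t' ∧ W t' ≤ W 0) := by
  have hXu : ContDiff ℝ (⊤ : ℕ∞) (WH.unc X) := hX
  have hreg' : ∀ ρ t : ℝ, WH.d1 X ρ t ≠ 0 := hreg
  have hflow' : ∀ ρ t : ℝ, WH.d2 X ρ t = willVT X ρ t • norT X ρ t := hflow
  have harg : ∀ t : ℝ, (fun ρ => willVT X ρ t ^ 2 * ‖deriv (fun q => X q t) ρ‖)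
      = (fun ρ => willVT X ρ t ^ 2 * WH.rX X ρ t) := fun t => rfl
  have key : ∀ t : ℝ, HasDerivAt W
      (-∫ ρ in (0:ℝ)..1, willVT X ρ t ^ 2 * ‖deriv (fun q => X q t) ρ‖) t := by
    intro t
    have h1 := (WH.hasDerivAt_intg hXu hreg' t).const_mul ((1:ℝ)/2)
    have hWe : W = fun s => (1/2) * ∫ ρ in (0:ℝ)..1, WH.gT X ρ s := hW
    rw [hWe]
    have hint1 : IntervalIntegrable
        (fun ρ => -(willVT X ρ t ^ 2 * WH.rX X ρ t)) MeasureTheory.volume 0 1 := by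
      apply Continuous.intervalIntegrable
      exact (((WH.cont_slice1 (WH.contDiff_willV hXu hreg') t).pow 2).mul
        (WH.cont_slice1 (WH.contDiff_rX hXu hreg') t)).neg
    have hint2 : IntervalIntegrable
        (fun ρ => WH.d1 (WH.GT X) ρ t) MeasureTheory.volume 0 1 :=
      (WH.cont_slice1 (WH.contDiff_unc_d1 (WH.contDiff_G hXu hreg')) t).intervalIntegrable 0 1
    have e1 : (1/2 : ℝ) * (∫ ρ in (0:ℝ)..1, WH.d2 (WH.gT X) ρ t)
        = ∫ ρ in (0:ℝ)..1, (1/2 : ℝ) * WH.d2 (WH.gT X) ρ t :=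
      (intervalIntegral.integral_const_mul _ _).symm
    have e2 : (∫ ρ in (0:ℝ)..1, (1/2 : ℝ) * WH.d2 (WH.gT X) ρ t)
        = ∫ ρ in (0:ℝ)..1,
          (-(willVT X ρ t ^ 2 * WH.rX X ρ t) + WH.d1 (WH.GT X) ρ t) :=
      intervalIntegral.integral_congr fun x _ => WH.key_identity hXu hreg' hflow' x t
    have e3 : (∫ ρ in (0:ℝ)..1,
          (-(willVT X ρ t ^ 2 * WH.rX X ρ t) + WH.d1 (WH.GT X) ρ t))
        = (∫ ρ in (0:ℝ)..1, -(willVT X ρ t ^ 2 * WH.rX X ρ t))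
          + ∫ ρ in (0:ℝ)..1, WH.d1 (WH.GT X) ρ t :=
      intervalIntegral.integral_add hint1 hint2
    have e4 := WH.integral_d1G_zero hXu hreg' hper t
    have e5 : (1/2 : ℝ) * (∫ ρ in (0:ℝ)..1, WH.d2 (WH.gT X) ρ t)
        = -∫ ρ in (0:ℝ)..1, willVT X ρ t ^ 2 * ‖deriv (fun q => X q t) ρ‖ := by
      rw [e1, e2, e3, e4, add_zero, intervalIntegral.integral_neg, harg t]
    rw [← e5]
    exact h1
  have hnonpos : ∀ t : ℝ,
      (-∫ ρ in (0:ℝ)..1, willVT X ρ t ^ 2 * ‖deriv (fun q => X q t) ρ‖) ≤ 0 := by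
    intro t
    apply neg_nonpos.mpr
    apply intervalIntegral.integral_nonneg zero_le_one
    intro u _
    exact mul_nonneg (sq_nonneg _) (norm_nonneg _)
  have hant : Antitone W := by
    apply antitone_of_deriv_nonpos
    · exact fun t => (key t).differentiableAt
    · intro t
      rw [(key t).deriv]
      exact hnonpos t
  exact ⟨key, hnonpos, fun t t' h0 htt' => ⟨hant htt', hant h0⟩⟩
end
end

section
/- Fix an integer N ≥ 3 with node indices j ∈ ℤ/Nℤ. Let X_j : ℝ → ℝ², V_j : ℝ → ℝ, κ_j : ℝ → ℝ (j ∈ ℤ/Nℤ) be continuously differentiable functions of time t, with segment vectors h_j(t) := X_j(t) − X_{j−1}(t) ≠ 0 for all t and per-segment unit normals n_j(t) := −h_j(t)^⊥/‖h_j(t)‖, where (u₁,u₂)^⊥ := (−u₂,u₁). Suppose that, for every t, the semi-discrete scheme holds: (S1) for every φ : ℤ/Nℤ → ℝ, ∑_j ‖h_j‖ [ (n_j·X'_{j−1}) φ_{j−1} + (n_j·X'_j) φ_j ] = ∑_j ‖h_j‖ [ V_{j−1} φ_{j−1} + V_j φ_j ]; (S2) for every ω : ℤ/Nℤ → ℝ²,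 (1/2)∑_j ‖h_j‖ [ V_{j−1}(n_j·ω_{j−1}) + V_j(n_j·ω_j) ] = ∑_j (1/‖h_j‖) [ −(κ_j − κ_{j−1}) n_j + ((κ_{j−1}² + κ_j²)/4) h_j ] · (ω_j − ω_{j−1}); (S3) for every ψ : ℤ/Nℤ → ℝ, (1/2)∑_j ‖h_j‖ [ κ'_{j−1} ψ_{j−1} + κ'_j ψ_j ] = ∑_j (1/‖h_j‖) ( n_j·(X'_j − X'_{j−1}) )(ψ_j − ψ_{j−1}) − (1/2)∑_j (1/‖h_j‖) ( h_j·(X'_j − X'_{j−1}) ) [ κ_{j−1} ψ_{j−1} + κ_j ψ_j ]. Then the discretized Willmore energy W^h(t) := (1/4)∑_j ‖h_j(t)‖ ( κ_{j−1}(t)² + κ_j(t)² ) satisfies d/dt W^h(t) = −(1/2)∑_j ‖h_j(t)‖ ( V_{j−1}(t)² + V_j(t)² ) ≤ 0; in particular W^h(t) ≤ W^h(t') for all t ≥ t'. (Theorem 3.1, semi-discrete energy dissipation) -/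
noncomputable section

/-! Differentiating `W^h` produces a length-change term and a curvature-change term. Testing
(S3) with `ψ = κ`, (S2) with `ω = X'` and (S1) with `φ = V`, the terms coupling the curvature
jumps `κ_j − κ_{j−1}` to the normal motion cancel between (S2) and (S3), and what remains of
`d/dt W^h` is `−(1/2)∑_j ‖h_j‖(V_{j−1}² + V_j²)`. -/

open Finset RealInnerProductSpace

section

variable {F : Type*} [NormedAddCommGroup F] [InnerProductSpace ℝ F]

theorem HasDerivAt.norm {f : ℝ → F} {f' : F} {x : ℝ}
    (hf : HasDerivAt f f' x) (h0 : f x ≠ 0) :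
    HasDerivAt (fun t => ‖f t‖) (‖f x‖⁻¹ * ⟪f x, f'⟫) x := by
  have hpos : 0 < ‖f x‖ := norm_pos_iff.mpr h0
  have := hf.norm_sq.sqrt (pow_pos hpos 2).ne'
  simp only [Real.sqrt_sq (norm_nonneg _)] at this
  convert this using 1
  field_simp

variable {ι : Type*} [Fintype ι] (prev : ι → ι)

theorem hasDerivAt_willmoreEnergy {h : ι → ℝ → F} {h' : ι → F} {κ : ι → ℝ → ℝ} {κ' : ι → ℝ}
    {t : ℝ}
    (hh : ∀ j, HasDerivAt (h j) (h' j) t) (hne : ∀ j, h j t ≠ 0)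
    (hκ : ∀ j, HasDerivAt (κ j) (κ' j) t) :
    HasDerivAt (fun s => (1/4) * ∑ j, ‖h j s‖ * (κ (prev j) s ^ 2 + κ j s ^ 2))
      ((1/4) * ∑ j, ‖h j t‖⁻¹ * ⟪h j t, h' j⟫ * (κ (prev j) t ^ 2 + κ j t ^ 2)
        + (1/2) * ∑ j, ‖h j t‖ * (κ' (prev j) * κ (prev j) t + κ' j * κ j t)) t := by
  have hterm : ∀ j, HasDerivAt (fun s => ‖h j s‖ * (κ (prev j) s ^ 2 + κ j s ^ 2))
      (‖h j t‖⁻¹ * ⟪h j t, h' j⟫ * (κ (prev j) t ^ 2 + κ j t ^ 2)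
        + 2 * (‖h j t‖ * (κ' (prev j) * κ (prev j) t + κ' j * κ j t))) t := by
    intro j
    refine (((hh j).norm (hne j)).mul
      (((hκ (prev j)).pow 2).add ((hκ j).pow 2))).congr_deriv ?_
    simp only [Nat.cast_ofNat, Pi.add_apply, Pi.pow_apply]
    ring
  refine ((HasDerivAt.fun_sum fun j _ => hterm j).const_mul (1/4 : ℝ)).congr_deriv ?_
  rw [sum_add_distrib, ← mul_sum]
  ring

theorem willmoreEnergy_rate_eq_neg_dissipation (h n Xd : ι → F) (V κ κ' : ι → ℝ)
    (S1 : ∀ φ : ι → ℝ,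
      ∑ j, ‖h j‖ * (⟪n j, Xd (prev j)⟫ * φ (prev j) + ⟪n j, Xd j⟫ * φ j)
        = ∑ j, ‖h j‖ * (V (prev j) * φ (prev j) + V j * φ j))
    (S2 : ∀ ω : ι → F,
      (1/2) * ∑ j, ‖h j‖ * (V (prev j) * ⟪n j, ω (prev j)⟫ + V j * ⟪n j, ω j⟫)
        = ∑ j, ‖h j‖⁻¹ * ⟪-(κ j - κ (prev j)) • n j
            + ((κ (prev j) ^ 2 + κ j ^ 2) / 4) • h j, ω j - ω (prev j)⟫)
    (S3 : ∀ ψ : ι → ℝ,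
      (1/2) * ∑ j, ‖h j‖ * (κ' (prev j) * ψ (prev j) + κ' j * ψ j)
        = ∑ j, ‖h j‖⁻¹ * ⟪n j, Xd j - Xd (prev j)⟫ * (ψ j - ψ (prev j))
          - (1/2) * ∑ j, ‖h j‖⁻¹ * ⟪h j, Xd j - Xd (prev j)⟫
              * (κ (prev j) * ψ (prev j) + κ j * ψ j)) :
    (1/4) * ∑ j, ‖h j‖⁻¹ * ⟪h j, Xd j - Xd (prev j)⟫ * (κ (prev j) ^ 2 + κ j ^ 2)
        + (1/2) * ∑ j, ‖h j‖ * (κ' (prev j) * κ (prev j) + κ' j * κ j)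
      = -(1/2) * ∑ j, ‖h j‖ * (V (prev j) ^ 2 + V j ^ 2) := by
  linear_combination (norm := skip) S3 κ + S2 Xd - (1/2) * S1 V
  simp only [inner_add_left, real_inner_smul_left, mul_sum, ← sum_add_distrib,
    ← sum_sub_distrib]
  exact sum_eq_zero fun j _ => by ring

end

theorem semidiscrete_energy_dissipation_general
    (N : ℕ) [NeZero N]
    (X : ZMod N → ℝ → E2) (V κ : ZMod N → ℝ → ℝ)
    (hX : ∀ j, ContDiff ℝ 1 (X j))
    (hκ : ∀ j, ContDiff ℝ 1 (κ j))
    (h : ZMod N → ℝ → E2) (hdef : ∀ j t, h j t = X j t - X (j-1) t)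
    (hne : ∀ j t, h j t ≠ 0)
    (n : ZMod N → ℝ → E2)
    (S1 : ∀ t : ℝ, ∀ φ : ZMod N → ℝ,
      ∑ j, ‖h j t‖ * ((inner ℝ (n j t) (deriv (X (j-1)) t) : ℝ) * φ (j-1)
          + (inner ℝ (n j t) (deriv (X j) t) : ℝ) * φ j)
        = ∑ j, ‖h j t‖ * (V (j-1) t * φ (j-1) + V j t * φ j))
    (S2 : ∀ t : ℝ, ∀ ω : ZMod N → E2,
      (1/2) * ∑ j, ‖h j t‖ * (V (j-1) t * (inner ℝ (n j t) (ω (j-1)) : ℝ)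
          + V j t * (inner ℝ (n j t) (ω j) : ℝ))
        = ∑ j, ‖h j t‖⁻¹ *
            (inner ℝ (-(κ j t - κ (j-1) t) • n j t
                + ((κ (j-1) t ^ 2 + κ j t ^ 2)/4) • h j t) (ω j - ω (j-1)) : ℝ))
    (S3 : ∀ t : ℝ, ∀ ψ : ZMod N → ℝ,
      (1/2) * ∑ j, ‖h j t‖ * (deriv (κ (j-1)) t * ψ (j-1) + deriv (κ j) t * ψ j)
        = ∑ j, ‖h j t‖⁻¹ * (inner ℝ (n j t) (deriv (X j) t - deriv (X (j-1)) t) : ℝ)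
              * (ψ j - ψ (j-1))
          - (1/2) * ∑ j, ‖h j t‖⁻¹
              * (inner ℝ (h j t) (deriv (X j) t - deriv (X (j-1)) t) : ℝ)
              * (κ (j-1) t * ψ (j-1) + κ j t * ψ j))
    (W : ℝ → ℝ)
    (Wdef : W = fun t => (1/4) * ∑ j, ‖h j t‖ * (κ (j-1) t ^ 2 + κ j t ^ 2)) :
    (∀ t : ℝ,
      HasDerivAt W (-(1/2) * ∑ j, ‖h j t‖ * (V (j-1) t ^ 2 + V j t ^ 2)) t) ∧
    (∀ t : ℝ, (-(1/2) * ∑ j, ‖h j t‖ * (V (j-1) t ^ 2 + V j t ^ 2)) ≤ 0) ∧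
    (∀ t t' : ℝ, t' ≤ t → W t ≤ W t') := by
  have hderiv : ∀ t, HasDerivAt W (-(1/2) * ∑ j, ‖h j t‖ * (V (j-1) t ^ 2 + V j t ^ 2)) t := by
    intro t
    have hXt : ∀ j, HasDerivAt (X j) (deriv (X j) t) t := fun j =>
      ((hX j).differentiable one_ne_zero t).hasDerivAt
    have hh : ∀ j, HasDerivAt (h j) (deriv (X j) t - deriv (X (j-1)) t) t := fun j => by
      rw [show h j = fun s => X j s - X (j-1) s from funext (hdef j)]
      exact (hXt j).sub (hXt (j-1))
    subst Wdef
    have hW := hasDerivAt_willmoreEnergy (· - 1) hh (hne · t) fun j =>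
      ((hκ j).differentiable one_ne_zero t).hasDerivAt
    rwa [willmoreEnergy_rate_eq_neg_dissipation (· - 1) (h · t) (n · t) (fun j => deriv (X j) t)
      (V · t) (κ · t) (fun j => deriv (κ j) t) (S1 t) (S2 t) (S3 t)] at hW
  have hdiss : ∀ t, -(1/2) * ∑ j, ‖h j t‖ * (V (j-1) t ^ 2 + V j t ^ 2) ≤ 0 := fun t => by
    have : 0 ≤ ∑ j, ‖h j t‖ * (V (j-1) t ^ 2 + V j t ^ 2) := sum_nonneg fun j _ => by positivity
    linarith
  refine ⟨hderiv, hdiss, fun t t' htt' => ?_⟩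
  exact antitone_of_deriv_nonpos (fun s => (hderiv s).differentiableAt)
    (fun s => (hderiv s).deriv ▸ hdiss s) htt'

/-- Theorem 3.1 (semi-discrete energy dissipation): if the nodal data
`(X_j, V_j, κ_j)` of a polygonal curve satisfy the semi-discrete scheme
(S1)-(S3) for all times, then the discretized Willmore energy
`W^h(t) = (1/4)∑_j ‖h_j‖(κ_{j−1}² + κ_j²)` satisfies
`d/dt W^h = −(1/2)∑_j ‖h_j‖(V_{j−1}² + V_j²) ≤ 0`; in particular `W^h` is
non-increasing. -/
theorem semidiscrete_energy_dissipation
    (N : ℕ) [NeZero N] (hN : 3 ≤ N)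
    (X : ZMod N → ℝ → E2) (V κ : ZMod N → ℝ → ℝ)
    (hX : ∀ j, ContDiff ℝ 1 (X j)) (hV : ∀ j, ContDiff ℝ 1 (V j))
    (hκ : ∀ j, ContDiff ℝ 1 (κ j))
    (h : ZMod N → ℝ → E2) (hdef : ∀ j t, h j t = X j t - X (j-1) t)
    (hne : ∀ j t, h j t ≠ 0)
    (n : ZMod N → ℝ → E2) (ndef : ∀ j t, n j t = -(‖h j t‖⁻¹ • perp (h j t)))
    (S1 : ∀ t : ℝ, ∀ φ : ZMod N → ℝ,
      ∑ j, ‖h j t‖ * ((inner ℝ (n j t) (deriv (X (j-1)) t) : ℝ) * φ (j-1)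
          + (inner ℝ (n j t) (deriv (X j) t) : ℝ) * φ j)
        = ∑ j, ‖h j t‖ * (V (j-1) t * φ (j-1) + V j t * φ j))
    (S2 : ∀ t : ℝ, ∀ ω : ZMod N → E2,
      (1/2) * ∑ j, ‖h j t‖ * (V (j-1) t * (inner ℝ (n j t) (ω (j-1)) : ℝ)
          + V j t * (inner ℝ (n j t) (ω j) : ℝ))
        = ∑ j, ‖h j t‖⁻¹ *
            (inner ℝ (-(κ j t - κ (j-1) t) • n j t
                + ((κ (j-1) t ^ 2 + κ j t ^ 2)/4) • h j t) (ω j - ω (j-1)) : ℝ))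
    (S3 : ∀ t : ℝ, ∀ ψ : ZMod N → ℝ,
      (1/2) * ∑ j, ‖h j t‖ * (deriv (κ (j-1)) t * ψ (j-1) + deriv (κ j) t * ψ j)
        = ∑ j, ‖h j t‖⁻¹ * (inner ℝ (n j t) (deriv (X j) t - deriv (X (j-1)) t) : ℝ)
              * (ψ j - ψ (j-1))
          - (1/2) * ∑ j, ‖h j t‖⁻¹
              * (inner ℝ (h j t) (deriv (X j) t - deriv (X (j-1)) t) : ℝ)
              * (κ (j-1) t * ψ (j-1) + κ j t * ψ j))
    (W : ℝ → ℝ)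
    (Wdef : W = fun t => (1/4) * ∑ j, ‖h j t‖ * (κ (j-1) t ^ 2 + κ j t ^ 2)) :
    (∀ t : ℝ,
      HasDerivAt W (-(1/2) * ∑ j, ‖h j t‖ * (V (j-1) t ^ 2 + V j t ^ 2)) t) ∧
    (∀ t : ℝ, (-(1/2) * ∑ j, ‖h j t‖ * (V (j-1) t ^ 2 + V j t ^ 2)) ≤ 0) ∧
    (∀ t t' : ℝ, t' ≤ t → W t ≤ W t') :=
  semidiscrete_energy_dissipation_general N X V κ hX hκ h hdef hne n S1 S2 S3 W Wdef
end
end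

section
/- Fix an integer N ≥ 3, a time step τ > 0, and node indices j ∈ ℤ/Nℤ. Let X^m_j ∈ ℝ² be vertices with segments h^m_j := X^m_j − X^m_{j−1} ≠ 0 and normals n^m_j := −(h^m_j)^⊥/‖h^m_j‖ where (u₁,u₂)^⊥ := (−u₂,u₁); let κ^m_j ∈ ℝ be given, and let X^{m+1}_j ∈ ℝ², V^{m+1}_j ∈ ℝ, κ^{m+1}_j ∈ ℝ satisfy, with δX_j := X^{m+1}_j − X^m_j and h^{m+1}_j := X^{m+1}_j − X^{m+1}_{j−1}: (E1) for every φ : ℤ/Nℤ → ℝ, ∑_j ‖h^m_j‖ [ (n^m_j·δX_{j−1}) φ_{j−1} + (n^m_j·δX_j) φ_j ] = τ ∑_j ‖h^m_j‖ [ V^{m+1}_{j−1} φ_{j−1} + V^{m+1}_j φ_j ]; (E2) for every ω : ℤ/Nℤ → ℝ², (1/2)∑_j ‖h^m_j‖ [ V^{m+1}_{j−1}(n^m_j·ω_{j−1}) + V^{m+1}_j(n^m_j·ω_j) ] = ∑_j (1/‖h^m_j‖) [ −(κ^{m+1}_j − κ^{m+1}_{j−1}) n^m_j + (((κ^{m+1}_{j−1})²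 + (κ^{m+1}_j)²)/4) h^{m+1}_j ] · (ω_j − ω_{j−1}); (E3) for every ψ : ℤ/Nℤ → ℝ, (1/2)∑_j ‖h^m_j‖ [ (κ^{m+1}_{j−1} − κ^m_{j−1}) ψ_{j−1} + (κ^{m+1}_j − κ^m_j) ψ_j ] = ∑_j (1/‖h^m_j‖) ( n^m_j·(δX_j − δX_{j−1}) )(ψ_j − ψ_{j−1}) − (1/2)∑_j (1/‖h^m_j‖) ( h^{m+1}_j·(δX_j − δX_{j−1}) ) [ κ^{m+1}_{j−1} ψ_{j−1} + κ^{m+1}_j ψ_j ]. Then the discretized Willmore energy decreases: (1/4)∑_j ‖h^{m+1}_j‖ ( (κ^{m+1}_{j−1})² + (κ^{m+1}_j)² ) ≤ (1/4)∑_j ‖h^m_j‖ ( (κ^m_{j−1})² + (κ^m_j)² ). (Theorem 4.1, unconditional energy dissipation of the fully discrete PFEM) -/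
noncomputable section

/-!
Test (E1) with `V^{m+1}`, (E2) with `δX` and (E3) with `κ^{m+1}`, and note
`δX_j − δX_{j−1} = h^{m+1}_j − h^m_j`. Put
`T := ∑ ‖h^m_j‖⁻¹ (n^m_j·(δX_j − δX_{j−1}))(κ^{m+1}_j − κ^{m+1}_{j−1})` and
`S := ∑ ‖h^m_j‖⁻¹ (h^{m+1}_j·(h^{m+1}_j − h^m_j))((κ^{m+1}_{j−1})² + (κ^{m+1}_j)²)`.
The first two tests give `S/4 − T = τ ∑ ‖h^m_j‖((V^{m+1}_{j−1})² + (V^{m+1}_j)²)/2 ≥ 0`; the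
third says that the lumped inner product `K` of `κ^{m+1} − κ^m` with `κ^{m+1}` equals `T − S/2`.
By `(a² − b²)/2 ≤ (a − b) a`, replacing `κ^m` by `κ^{m+1}` in `4 W^m` costs at most `4 K`, and by
`‖a‖ − ‖b‖ ≤ ‖b‖⁻¹ a·(a − b)`, then replacing `h^m` by `h^{m+1}` costs at most `S`.
Hence `4 (W^{m+1} − W^m) ≤ S + 4 K = 4 T − S ≤ 0`.
-/

open Finset RealInnerProductSpace

section

variable {F : Type*} [NormedAddCommGroup F] [InnerProductSpace ℝ F]

theorem norm_sub_norm_le_inv_norm_mul_inner_sub (a : F) {b : F} (hb : b ≠ 0) :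
    ‖a‖ - ‖b‖ ≤ ‖b‖⁻¹ * ⟪a, a - b⟫ := by
  have hcs := real_inner_le_norm a b
  have key : ‖b‖ * (‖a‖ - ‖b‖) ≤ ⟪a, a - b⟫ := by
    rw [inner_sub_right, real_inner_self_eq_norm_sq]
    nlinarith [sq_nonneg (‖a‖ - ‖b‖)]
  rwa [le_inv_mul_iff₀ (norm_pos_iff.mpr hb)]

theorem sum_norm_mul_sub_sum_norm_mul_le {ι : Type*} [Fintype ι] (a b : ι → F)
    (hb : ∀ i, b i ≠ 0) {w : ι → ℝ} (hw : ∀ i, 0 ≤ w i) :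
    ∑ i, ‖a i‖ * w i - ∑ i, ‖b i‖ * w i ≤ ∑ i, ‖b i‖⁻¹ * ⟪a i, a i - b i⟫ * w i := by
  rw [← sum_sub_distrib]
  gcongr with i
  rw [← sub_mul]
  exact mul_le_mul_of_nonneg_right (norm_sub_norm_le_inv_norm_mul_inner_sub _ (hb i)) (hw i)

variable {N : ℕ} [NeZero N]

theorem half_sum_mass_sq_sub_le (ℓ : ZMod N → ℝ) (hℓ : ∀ j, 0 ≤ ℓ j) (κ κ' : ZMod N → ℝ) :
    (1/2) * (∑ j, ℓ j * (κ' (j-1) ^ 2 + κ' j ^ 2) - ∑ j, ℓ j * (κ (j-1) ^ 2 + κ j ^ 2))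
      ≤ ∑ j, ℓ j * ((κ' (j-1) - κ (j-1)) * κ' (j-1) + (κ' j - κ j) * κ' j) := by
  rw [← sum_sub_distrib, mul_sum]
  refine sum_le_sum fun j _ => ?_
  nlinarith [hℓ j, mul_nonneg (hℓ j) (sq_nonneg (κ' (j-1) - κ (j-1))),
    mul_nonneg (hℓ j) (sq_nonneg (κ' j - κ j))]

theorem sum_inner_normal_mul_sub_le_of_velocity_tests {τ : ℝ} (hτ : 0 ≤ τ)
    (h₀ h₁ n d : ZMod N → F) (V κ : ZMod N → ℝ)
    (hV : ∑ j, ‖h₀ j‖ * (⟪n j, d (j-1)⟫ * V (j-1) + ⟪n j, d j⟫ * V j)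
      = τ * ∑ j, ‖h₀ j‖ * (V (j-1) * V (j-1) + V j * V j))
    (hd : (1/2) * ∑ j, ‖h₀ j‖ * (V (j-1) * ⟪n j, d (j-1)⟫ + V j * ⟪n j, d j⟫)
      = ∑ j, ‖h₀ j‖⁻¹ *
          ⟪-(κ j - κ (j-1)) • n j + ((κ (j-1) ^ 2 + κ j ^ 2)/4) • h₁ j, d j - d (j-1)⟫) :
    ∑ j, ‖h₀ j‖⁻¹ * ⟪n j, d j - d (j-1)⟫ * (κ j - κ (j-1))
      ≤ (1/4) * ∑ j, ‖h₀ j‖⁻¹ * ⟪h₁ j, d j - d (j-1)⟫ * (κ (j-1) ^ 2 + κ j ^ 2) := by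
  have hmass : 0 ≤ ∑ j, ‖h₀ j‖ * (V (j-1) * V (j-1) + V j * V j) :=
    sum_nonneg fun j _ => mul_nonneg (norm_nonneg _)
      (add_nonneg (mul_self_nonneg _) (mul_self_nonneg _))
  have hsplit : ∑ j, ‖h₀ j‖⁻¹ *
      ⟪-(κ j - κ (j-1)) • n j + ((κ (j-1) ^ 2 + κ j ^ 2)/4) • h₁ j, d j - d (j-1)⟫
      = (1/4) * ∑ j, ‖h₀ j‖⁻¹ * ⟪h₁ j, d j - d (j-1)⟫ * (κ (j-1) ^ 2 + κ j ^ 2)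
        - ∑ j, ‖h₀ j‖⁻¹ * ⟪n j, d j - d (j-1)⟫ * (κ j - κ (j-1)) := by
    rw [mul_sum, ← sum_sub_distrib]
    refine sum_congr rfl fun j _ => ?_
    rw [inner_add_left, real_inner_smul_left, real_inner_smul_left]
    ring
  have hswap : ∑ j, ‖h₀ j‖ * (V (j-1) * ⟪n j, d (j-1)⟫ + V j * ⟪n j, d j⟫)
      = ∑ j, ‖h₀ j‖ * (⟪n j, d (j-1)⟫ * V (j-1) + ⟪n j, d j⟫ * V j) :=
    sum_congr rfl fun j _ => by ring
  linarith [mul_nonneg hτ hmass]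

end

theorem fully_discrete_energy_dissipation_general
    (N : ℕ) [NeZero N] (τ : ℝ) (hτ : 0 < τ)
    (Xm Xm1 : ZMod N → E2) (Vm1 κm κm1 : ZMod N → ℝ)
    (hm hm1 δX : ZMod N → E2)
    (hmdef : ∀ j, hm j = Xm j - Xm (j-1))
    (hm1def : ∀ j, hm1 j = Xm1 j - Xm1 (j-1))
    (δXdef : ∀ j, δX j = Xm1 j - Xm j)
    (hmne : ∀ j, hm j ≠ 0)
    (n : ZMod N → E2)
    (E1 : ∀ φ : ZMod N → ℝ,
      ∑ j, ‖hm j‖ * ((inner ℝ (n j) (δX (j-1)) : ℝ) * φ (j-1)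
          + (inner ℝ (n j) (δX j) : ℝ) * φ j)
        = τ * ∑ j, ‖hm j‖ * (Vm1 (j-1) * φ (j-1) + Vm1 j * φ j))
    (E2 : ∀ ω : ZMod N → E2,
      (1/2) * ∑ j, ‖hm j‖ * (Vm1 (j-1) * (inner ℝ (n j) (ω (j-1)) : ℝ)
          + Vm1 j * (inner ℝ (n j) (ω j) : ℝ))
        = ∑ j, ‖hm j‖⁻¹ *
            (inner ℝ (-(κm1 j - κm1 (j-1)) • n j
                + ((κm1 (j-1) ^ 2 + κm1 j ^ 2)/4) • hm1 j) (ω j - ω (j-1)) : ℝ))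
    (E3 : ∀ ψ : ZMod N → ℝ,
      (1/2) * ∑ j, ‖hm j‖ * ((κm1 (j-1) - κm (j-1)) * ψ (j-1) + (κm1 j - κm j) * ψ j)
        = ∑ j, ‖hm j‖⁻¹ * (inner ℝ (n j) (δX j - δX (j-1)) : ℝ) * (ψ j - ψ (j-1))
          - (1/2) * ∑ j, ‖hm j‖⁻¹ * (inner ℝ (hm1 j) (δX j - δX (j-1)) : ℝ)
              * (κm1 (j-1) * ψ (j-1) + κm1 j * ψ j))
    :
    (1/4) * ∑ j, ‖hm1 j‖ * (κm1 (j-1) ^ 2 + κm1 j ^ 2)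
      ≤ (1/4) * ∑ j, ‖hm j‖ * (κm (j-1) ^ 2 + κm j ^ 2) := by
  have hΔ : ∀ j, δX j - δX (j-1) = hm1 j - hm j := fun j => by
    rw [δXdef, δXdef, hm1def, hmdef]
    abel
  have hwork := sum_inner_normal_mul_sub_le_of_velocity_tests hτ.le hm hm1 n δX Vm1 κm1
    (E1 Vm1) (E2 δX)
  have hcurv := E3 κm1
  simp only [hΔ, ← sq] at hwork hcurv
  have hlength := sum_norm_mul_sub_sum_norm_mul_le hm1 hm hmne
    (w := fun j => κm1 (j-1) ^ 2 + κm1 j ^ 2) fun j => by positivity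
  have hcurvature := half_sum_mass_sq_sub_le (fun j => ‖hm j‖) (fun j => norm_nonneg _) κm κm1
  linarith

/-- Theorem 4.1 (unconditional energy dissipation of the fully discrete PFEM):
a solution of the backward-Euler scheme (E1)-(E3) satisfies
`W^{m+1} ≤ W^m` for the discretized Willmore energy
`W^m = (1/4)∑_j ‖h^m_j‖((κ^m_{j−1})² + (κ^m_j)²)`, unconditionally in `τ`. -/
theorem fully_discrete_energy_dissipation
    (N : ℕ) [NeZero N] (hN : 3 ≤ N) (τ : ℝ) (hτ : 0 < τ)
    (Xm Xm1 : ZMod N → E2) (Vm1 κm κm1 : ZMod N → ℝ)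
    (hm hm1 δX : ZMod N → E2)
    (hmdef : ∀ j, hm j = Xm j - Xm (j-1))
    (hm1def : ∀ j, hm1 j = Xm1 j - Xm1 (j-1))
    (δXdef : ∀ j, δX j = Xm1 j - Xm j)
    (hmne : ∀ j, hm j ≠ 0)
    (n : ZMod N → E2) (ndef : ∀ j, n j = -(‖hm j‖⁻¹ • perp (hm j)))
    (E1 : ∀ φ : ZMod N → ℝ,
      ∑ j, ‖hm j‖ * ((inner ℝ (n j) (δX (j-1)) : ℝ) * φ (j-1)
          + (inner ℝ (n j) (δX j) : ℝ) * φ j)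
        = τ * ∑ j, ‖hm j‖ * (Vm1 (j-1) * φ (j-1) + Vm1 j * φ j))
    (E2 : ∀ ω : ZMod N → E2,
      (1/2) * ∑ j, ‖hm j‖ * (Vm1 (j-1) * (inner ℝ (n j) (ω (j-1)) : ℝ)
          + Vm1 j * (inner ℝ (n j) (ω j) : ℝ))
        = ∑ j, ‖hm j‖⁻¹ *
            (inner ℝ (-(κm1 j - κm1 (j-1)) • n j
                + ((κm1 (j-1) ^ 2 + κm1 j ^ 2)/4) • hm1 j) (ω j - ω (j-1)) : ℝ))
    (E3 : ∀ ψ : ZMod N → ℝ,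
      (1/2) * ∑ j, ‖hm j‖ * ((κm1 (j-1) - κm (j-1)) * ψ (j-1) + (κm1 j - κm j) * ψ j)
        = ∑ j, ‖hm j‖⁻¹ * (inner ℝ (n j) (δX j - δX (j-1)) : ℝ) * (ψ j - ψ (j-1))
          - (1/2) * ∑ j, ‖hm j‖⁻¹ * (inner ℝ (hm1 j) (δX j - δX (j-1)) : ℝ)
              * (κm1 (j-1) * ψ (j-1) + κm1 j * ψ j))
    :
    (1/4) * ∑ j, ‖hm1 j‖ * (κm1 (j-1) ^ 2 + κm1 j ^ 2)
      ≤ (1/4) * ∑ j, ‖hm j‖ * (κm (j-1) ^ 2 + κm j ^ 2) :=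
  fully_discrete_energy_dissipation_general N τ hτ Xm Xm1 Vm1 κm κm1 hm hm1 δX hmdef hm1def δXdef
    hmne n E1 E2 E3
end
end

section
/- Fix an integer N ≥ 3, a time step τ > 0, and node indices j ∈ ℤ/Nℤ. Let X^m_j ∈ ℝ² with h^m_j := X^m_j − X^m_{j−1} ≠ 0 and n^m_j := −(h^m_j)^⊥/‖h^m_j‖ where (u₁,u₂)^⊥ := (−u₂,u₁); let κ^m_j ∈ ℝ, and let X^{m+1}_j ∈ ℝ², V^{m+1}_j ∈ ℝ, κ^{m+1}_j ∈ ℝ satisfy the three fully discrete equations (E1), (E2), (E3) (stated in the context), with δX_j := X^{m+1}_j − X^m_j and h^{m+1}_j := X^{m+1}_j − X^{m+1}_{j−1}. Then the following identity holds: (1/2)∑_j ‖h^m_j‖ [ (κ^{m+1}_{j−1} − κ^m_{j−1}) κ^{m+1}_{j−1} + (κ^{m+1}_j − κ^m_j) κ^{m+1}_j ] = −(τ/2)∑_j ‖h^m_j‖ [ (V^{m+1}_{j−1})² + (V^{m+1}_j)² ] − ∑_j ( ((κ^{m+1}_{j−1})² + (κ^{m+1}_j)²)/4 ) ( h^{m+1}_j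 · (h^{m+1}_j − h^m_j) ) / ‖h^m_j‖. (Identity (4.5) in the proof of Theorem 4.1) -/
noncomputable section

theorem fully_discrete_key_identity_general
    (N : ℕ) [NeZero N] (τ : ℝ)
    (Xm Xm1 : ZMod N → E2) (Vm1 κm κm1 : ZMod N → ℝ)
    (hm hm1 δX : ZMod N → E2)
    (hmdef : ∀ j, hm j = Xm j - Xm (j-1))
    (hm1def : ∀ j, hm1 j = Xm1 j - Xm1 (j-1))
    (δXdef : ∀ j, δX j = Xm1 j - Xm j)
    (n : ZMod N → E2)
    (E1 : ∀ φ : ZMod N → ℝ,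
      ∑ j, ‖hm j‖ * ((inner ℝ (n j) (δX (j-1)) : ℝ) * φ (j-1)
          + (inner ℝ (n j) (δX j) : ℝ) * φ j)
        = τ * ∑ j, ‖hm j‖ * (Vm1 (j-1) * φ (j-1) + Vm1 j * φ j))
    (E2 : ∀ ω : ZMod N → E2,
      (1/2) * ∑ j, ‖hm j‖ * (Vm1 (j-1) * (inner ℝ (n j) (ω (j-1)) : ℝ)
          + Vm1 j * (inner ℝ (n j) (ω j) : ℝ))
        = ∑ j, ‖hm j‖⁻¹ *
            (inner ℝ (-(κm1 j - κm1 (j-1)) • n j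
                + ((κm1 (j-1) ^ 2 + κm1 j ^ 2)/4) • hm1 j) (ω j - ω (j-1)) : ℝ))
    (E3 : ∀ ψ : ZMod N → ℝ,
      (1/2) * ∑ j, ‖hm j‖ * ((κm1 (j-1) - κm (j-1)) * ψ (j-1) + (κm1 j - κm j) * ψ j)
        = ∑ j, ‖hm j‖⁻¹ * (inner ℝ (n j) (δX j - δX (j-1)) : ℝ) * (ψ j - ψ (j-1))
          - (1/2) * ∑ j, ‖hm j‖⁻¹ * (inner ℝ (hm1 j) (δX j - δX (j-1)) : ℝ)
              * (κm1 (j-1) * ψ (j-1) + κm1 j * ψ j))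
    :
    (1/2) * ∑ j, ‖hm j‖ * ((κm1 (j-1) - κm (j-1)) * κm1 (j-1) + (κm1 j - κm j) * κm1 j)
      = -(τ/2) * ∑ j, ‖hm j‖ * (Vm1 (j-1) ^ 2 + Vm1 j ^ 2)
        - ∑ j, ((κm1 (j-1) ^ 2 + κm1 j ^ 2)/4)
            * (inner ℝ (hm1 j) (hm1 j - hm j) : ℝ) / ‖hm j‖ := by
  have hδ : ∀ j, δX j - δX (j-1) = hm1 j - hm j := fun j => by
    rw [δXdef, δXdef, hm1def, hmdef, sub_sub_sub_comm]
  -- The tested equations cancel summand by summand, so no reindexing of the cyclic sums is needed.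
  linear_combination (norm := skip) E3 κm1 + E2 δX - (1/2) * E1 Vm1
  simp only [Finset.mul_sum, ← Finset.sum_add_distrib, ← Finset.sum_sub_distrib]
  refine Finset.sum_eq_zero fun j _ => ?_
  simp only [hδ j, inner_add_left, real_inner_smul_left]
  ring

/-- Identity (4.5) in the proof of Theorem 4.1: combining the three fully
discrete equations (E1)-(E3) with suitable test functions yields
`(κ^{m+1}−κ^m, κ^{m+1})_{Γ^m} = −τ(V^{m+1},V^{m+1})_{Γ^m}
   − (1/2)((κ^{m+1})² ∂ₛX^{m+1}, ∂ₛ(X^{m+1}−X^m))_{Γ^m}`. -/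
theorem fully_discrete_key_identity
    (N : ℕ) [NeZero N] (hN : 3 ≤ N) (τ : ℝ) (hτ : 0 < τ)
    (Xm Xm1 : ZMod N → E2) (Vm1 κm κm1 : ZMod N → ℝ)
    (hm hm1 δX : ZMod N → E2)
    (hmdef : ∀ j, hm j = Xm j - Xm (j-1))
    (hm1def : ∀ j, hm1 j = Xm1 j - Xm1 (j-1))
    (δXdef : ∀ j, δX j = Xm1 j - Xm j)
    (hmne : ∀ j, hm j ≠ 0)
    (n : ZMod N → E2) (ndef : ∀ j, n j = -(‖hm j‖⁻¹ • perp (hm j)))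
    (E1 : ∀ φ : ZMod N → ℝ,
      ∑ j, ‖hm j‖ * ((inner ℝ (n j) (δX (j-1)) : ℝ) * φ (j-1)
          + (inner ℝ (n j) (δX j) : ℝ) * φ j)
        = τ * ∑ j, ‖hm j‖ * (Vm1 (j-1) * φ (j-1) + Vm1 j * φ j))
    (E2 : ∀ ω : ZMod N → E2,
      (1/2) * ∑ j, ‖hm j‖ * (Vm1 (j-1) * (inner ℝ (n j) (ω (j-1)) : ℝ)
          + Vm1 j * (inner ℝ (n j) (ω j) : ℝ))
        = ∑ j, ‖hm j‖⁻¹ *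
            (inner ℝ (-(κm1 j - κm1 (j-1)) • n j
                + ((κm1 (j-1) ^ 2 + κm1 j ^ 2)/4) • hm1 j) (ω j - ω (j-1)) : ℝ))
    (E3 : ∀ ψ : ZMod N → ℝ,
      (1/2) * ∑ j, ‖hm j‖ * ((κm1 (j-1) - κm (j-1)) * ψ (j-1) + (κm1 j - κm j) * ψ j)
        = ∑ j, ‖hm j‖⁻¹ * (inner ℝ (n j) (δX j - δX (j-1)) : ℝ) * (ψ j - ψ (j-1))
          - (1/2) * ∑ j, ‖hm j‖⁻¹ * (inner ℝ (hm1 j) (δX j - δX (j-1)) : ℝ)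
              * (κm1 (j-1) * ψ (j-1) + κm1 j * ψ j))
    :
    (1/2) * ∑ j, ‖hm j‖ * ((κm1 (j-1) - κm (j-1)) * κm1 (j-1) + (κm1 j - κm j) * κm1 j)
      = -(τ/2) * ∑ j, ‖hm j‖ * (Vm1 (j-1) ^ 2 + Vm1 j ^ 2)
        - ∑ j, ((κm1 (j-1) ^ 2 + κm1 j ^ 2)/4)
            * (inner ℝ (hm1 j) (hm1 j - hm j) : ℝ) / ‖hm j‖ :=
  fully_discrete_key_identity_general N τ Xm Xm1 Vm1 κm κm1 hm hm1 δX hmdef hm1def δXdef n E1 E2 E3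
end
end
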